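/- arXiv:1610.01552 — 2 statements merged into one kernel-verified Lean document; each statement's English description precedes it below -/
import Mathlib

section
/- Let 𝒢 be a real Hilbert space, let φ ∈ Γ₀(𝒢) be positively homogeneous with dom φ = 𝒢, and let ϕ ∈ Γ₀(ℝ) be increasing on the range of φ and such that 0 ∈ dom ϕ. Then ϕ ∘ φ ∈ Γ₀(𝒢), its perspective [ϕ ∘ φ]~ belongs to Γ₀(ℝ ⊕ 𝒢), and for every η ∈ ℝ and y ∈ 𝒢, [ϕ ∘ φ]~(η, y) = ϕ̃(η, φ(y)), where ϕ̃ is the perspective of ϕ. -/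
open scoped RealInnerProductSpace Classical

noncomputable section

/-- Properness for extended-real-valued functions. -/
def IsProperE {G : Type*} (f : G → EReal) : Prop :=
  (∀ x, f x ≠ ⊥) ∧ ∃ x, f x ≠ ⊤

/-- Convexity for extended-real-valued functions. -/
def ConvexE (G : Type*) [AddCommGroup G] [Module ℝ G] (f : G → EReal) : Prop :=
  ∀ x y : G, ∀ a b : ℝ, 0 ≤ a → 0 ≤ b → a + b = 1 →
    f (a • x + b • y) ≤ (a : EReal) * f x + (b : EReal) * f y

/-- The class Γ₀: proper, lower semicontinuous, convex. -/
def Gamma0 (G : Type*) [AddCommGroup G] [Module ℝ G] [TopologicalSpace G]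
    (f : G → EReal) : Prop :=
  IsProperE f ∧ LowerSemicontinuous f ∧ ConvexE G f

/-- The recession function. -/
def recFn {G : Type*} [AddCommGroup G] (f : G → EReal) (y : G) : EReal :=
  ⨆ x : {x : G // f x ≠ ⊤}, (f ((x : G) + y) - f (x : G))

/-- The perspective function. -/
def persp {G : Type*} [AddCommGroup G] [Module ℝ G] (f : G → EReal) : ℝ × G → EReal :=
  fun p => if 0 < p.1 then (p.1 : EReal) * f (p.1⁻¹ • p.2)
           else if p.1 = 0 then recFn f p.2 else ⊤

/-- The Fenchel conjugate. -/
def conjFn {G : Type*} [NormedAddCommGroup G] [InnerProductSpace ℝ G]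
    (f : G → EReal) (u : G) : EReal :=
  ⨆ x : G, (((inner ℝ x u : ℝ) : EReal) - f x)

/-- The support function of a set. -/
def suppFn {G : Type*} [NormedAddCommGroup G] [InnerProductSpace ℝ G]
    (D : Set G) (y : G) : EReal :=
  ⨆ u ∈ D, ((inner ℝ y u : ℝ) : EReal)

/-- The convex subdifferential. -/
def subdiff {G : Type*} [NormedAddCommGroup G] [InnerProductSpace ℝ G]
    (f : G → EReal) (x : G) : Set G :=
  {u | ∀ z : G, (((inner ℝ (z - x) u : ℝ) : EReal) + f x ≤ f z)}




lemma ER.mul_le {c : ℝ} (hc : 0 ≤ c) {a b : EReal} (h : a ≤ b) :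
    (c : EReal) * a ≤ (c : EReal) * b :=
  mul_le_mul_of_nonneg_left h (by exact_mod_cast hc)

lemma ER.distrib {c : ℝ} (hc : 0 ≤ c) {A B : EReal} (hA : A ≠ ⊥) (hB : B ≠ ⊥) :
    (c : EReal) * (A + B) = (c : EReal) * A + (c : EReal) * B := by
  rcases eq_or_lt_of_le hc with rfl | hc'
  · simp
  induction A with
  | bot => simp at hA
  | coe A =>
    induction B with
    | bot => simp at hB
    | coe B => norm_cast; ring
    | top =>
      rw [EReal.add_top_of_ne_bot (by exact_mod_cast EReal.coe_ne_bot A),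
        EReal.mul_top_of_pos (by exact_mod_cast hc'), EReal.add_top_of_ne_bot]
      exact (EReal.coe_mul c A) ▸ EReal.coe_ne_bot _
  | top =>
    rw [EReal.top_add_of_ne_bot hB, EReal.mul_top_of_pos (by exact_mod_cast hc')]
    induction B with
    | bot => simp at hB
    | coe B =>
      rw [EReal.top_add_of_ne_bot]; exact (EReal.coe_mul c B) ▸ EReal.coe_ne_bot _
    | top =>
      rw [EReal.mul_top_of_pos (by exact_mod_cast hc'), EReal.top_add_top]

lemma ER.mul_ne_bot {c : ℝ} (hc : 0 ≤ c) {A : EReal} (hA : A ≠ ⊥) :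
    (c : EReal) * A ≠ ⊥ := by
  rcases eq_or_lt_of_le hc with rfl | hc'
  · simp
  induction A with
  | bot => simp at hA
  | coe A => rw [← EReal.coe_mul]; exact EReal.coe_ne_bot _
  | top => rw [EReal.mul_top_of_pos (by exact_mod_cast hc')]; exact top_ne_bot

lemma ER.real_of (a : EReal) (h1 : a ≠ ⊥) (h2 : a ≠ ⊤) : ∃ r : ℝ, a = (r : EReal) := by
  lift a to ℝ using ⟨h2, h1⟩; exact ⟨a, rfl⟩



lemma fourpoint (ϕ : ℝ → EReal) (hne : ∀ s, ϕ s ≠ ⊥) (hc : ConvexE ℝ ϕ)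
    (u v d : ℝ) (huv : u ≤ v) (hd : 0 ≤ d) :
    ϕ (u + d) + ϕ v ≤ ϕ (v + d) + ϕ u := by
  by_cases hu : ϕ u = ⊤
  · rw [hu, EReal.add_top_of_ne_bot (hne _)]; exact le_top
  by_cases hvd : ϕ (v + d) = ⊤
  · rw [hvd, EReal.top_add_of_ne_bot (hne _)]; exact le_top
  obtain ⟨p, hp⟩ := ER.real_of _ (hne u) hu
  obtain ⟨q, hq⟩ := ER.real_of _ (hne (v + d)) hvd
  rcases eq_or_lt_of_le hd with rfl | hd'
  · simp only [add_zero]; rw [add_comm]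
  rcases eq_or_lt_of_le huv with rfl | huv'
  · rw [add_comm]
  set D := v - u + d with hD
  have hD' : 0 < D := by dsimp [D]; linarith
  set l := d / D with hl
  have hl0 : 0 ≤ l := le_of_lt (div_pos hd' hD')
  have hl1 : 0 ≤ 1 - l := by
    have : l ≤ 1 := by rw [hl, div_le_one hD']; dsimp [D]; linarith
    linarith
  have hlD : l * (v - u + d) = d := div_mul_cancel₀ d hD'.ne'
  have harg1 : (1 - l) • u + l • (v + d) = u + d := by
    simp only [smul_eq_mul]; linear_combination hlD
  have harg2 : l • u + (1 - l) • (v + d) = v := by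
    simp only [smul_eq_mul]; linear_combination -hlD
  have c1 := hc u (v + d) (1 - l) l hl1 hl0 (by ring)
  have c2 := hc u (v + d) l (1 - l) hl0 hl1 (by ring)
  rw [harg1, hp, hq] at c1
  rw [harg2, hp, hq] at c2
  rw [← EReal.coe_mul, ← EReal.coe_mul, ← EReal.coe_add] at c1 c2
  have hud : ϕ (u + d) ≠ ⊤ := fun h => by
    rw [h] at c1; exact EReal.coe_ne_top _ (top_le_iff.mp c1)
  have hv : ϕ v ≠ ⊤ := fun h => by
    rw [h] at c2; exact EReal.coe_ne_top _ (top_le_iff.mp c2)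
  obtain ⟨a, ha⟩ := ER.real_of _ (hne (u + d)) hud
  obtain ⟨b, hb⟩ := ER.real_of _ (hne v) hv
  rw [ha, hb, hp, hq, ← EReal.coe_add, ← EReal.coe_add, EReal.coe_le_coe_iff]
  rw [ha, EReal.coe_le_coe_iff] at c1
  rw [hb, EReal.coe_le_coe_iff] at c2
  linarith








lemma ER.sub_real_ne_bot {a : EReal} (ha : a ≠ ⊥) (r : ℝ) : a - (r : EReal) ≠ ⊥ := by
  induction a with
  | bot => simp at ha
  | coe a => rw [← EReal.coe_sub]; exact EReal.coe_ne_bot _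
  | top => rw [EReal.top_sub_coe]; exact top_ne_bot

lemma ER.add_eq_top_left {p : ℝ} {A : EReal} (h : (p : EReal) + A = ⊤) : A = ⊤ := by
  induction A with
  | bot => rw [EReal.add_bot] at h; exact absurd h bot_ne_top
  | coe A => rw [← EReal.coe_add] at h; exact absurd h (EReal.coe_ne_top _)
  | top => rfl

lemma ER.mul_eq_top_ne_bot {c : ℝ} (hc : 0 < c) {A : EReal} (hA : A ≠ ⊥)
    (h : (c : EReal) * A = ⊤) : A = ⊤ := by
  induction A with
  | bot => simp at hA
  | coe A => rw [← EReal.coe_mul] at h; exact absurd h (EReal.coe_ne_top _)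
  | top => rfl

section Rec
variable {G : Type*} [AddCommGroup G] [Module ℝ G] (f : G → EReal)

lemma rec_ge (y x : G) (hx : f x ≠ ⊤) : f (x + y) - f x ≤ recFn f y :=
  le_iSup (fun z : {x : G // f x ≠ ⊤} => f ((z : G) + y) - f (z : G)) ⟨x, hx⟩

lemma le_add_rec (hbot : ∀ z, f z ≠ ⊥) (y x : G) (hx : f x ≠ ⊤) :
    f (x + y) ≤ f x + recFn f y := by
  obtain ⟨p, hp⟩ := ER.real_of _ (hbot x) hx
  have h := rec_ge f y x hx
  rw [hp] at h ⊢
  have h2 := (EReal.sub_le_iff_le_add (Or.inl (EReal.coe_ne_bot p))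
    (Or.inl (EReal.coe_ne_top p))).mp h
  exact h2.trans (le_of_eq (add_comm _ _))

lemma rec_ne_bot (hprop : IsProperE f) (y : G) : recFn f y ≠ ⊥ := by
  obtain ⟨x₀, hx₀⟩ := hprop.2
  obtain ⟨p, hp⟩ := ER.real_of _ (hprop.1 x₀) hx₀
  have h := rec_ge f y x₀ hx₀
  rw [hp] at h
  intro hb
  rw [hb, le_bot_iff] at h
  exact ER.sub_real_ne_bot (hprop.1 _) p h

lemma rec_smul_bound (hbot : ∀ z, f z ≠ ⊥) (hconv : ConvexE G f) (y : G) :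
    ∀ l : ℝ, 0 < l → ∀ x, f x ≠ ⊤ → f (x + l • y) ≤ f x + (l : EReal) * recFn f y := by
  have base : ∀ l : ℝ, 0 < l → l ≤ 1 → ∀ x, f x ≠ ⊤ →
      f (x + l • y) ≤ f x + (l : EReal) * recFn f y := by
    intro l hl0 hl1 x hx
    obtain ⟨p, hp⟩ := ER.real_of _ (hbot x) hx
    have harg : (1 - l) • x + l • (x + y) = x + l • y := by
      rw [smul_add, ← add_assoc, ← add_smul]; norm_num
    have c1 := hconv x (x + y) (1 - l) l (by linarith) (le_of_lt hl0) (by ring)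
    rw [harg] at c1
    have c2 : (l : EReal) * f (x + y) ≤ (l : EReal) * ((p : EReal) + recFn f y) := by
      apply ER.mul_le (le_of_lt hl0)
      rw [← hp]; exact le_add_rec f hbot y x hx
    rw [ER.distrib (le_of_lt hl0) (EReal.coe_ne_bot p) (rec_ne_bot f ⟨hbot, x, hx⟩ y)] at c2
    calc f (x + l • y) ≤ ((1 - l : ℝ) : EReal) * f x + (l : EReal) * f (x + y) := c1
      _ ≤ ((1 - l : ℝ) : EReal) * (p : EReal) +
          ((l : EReal) * (p : EReal) + (l : EReal) * recFn f y) := by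
        apply add_le_add _ c2
        rw [hp]
      _ = f x + (l : EReal) * recFn f y := by
        rw [← add_assoc, ← EReal.coe_mul, ← EReal.coe_mul, ← EReal.coe_add, hp]
        congr 2
        ring
  -- general case by induction on ⌈l⌉
  have main : ∀ n : ℕ, ∀ l : ℝ, 0 < l → l ≤ n + 1 → ∀ x, f x ≠ ⊤ →
      f (x + l • y) ≤ f x + (l : EReal) * recFn f y := by
    intro n
    induction n with
    | zero => intro l hl0 hl1 x hx; exact base l hl0 (by push_cast at hl1; linarith) x hx
    | succ n ih =>
      intro l hl0 hl1 x hx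
      by_cases hle : l ≤ 1
      · exact base l hl0 hle x hx
      push_neg at hle
      obtain ⟨p, hp⟩ := ER.real_of _ (hbot x) hx
      have hl1' : 0 < l - 1 := by linarith
      have hsplit : x + l • y = (x + (l - 1) • y) + (1 : ℝ) • y := by
        rw [add_assoc, ← add_smul]; norm_num
      have ihx := ih (l - 1) hl1' (by push_cast at hl1 ⊢; linarith) x hx
      by_cases htop : f (x + (l - 1) • y) = ⊤
      · -- then recFn f y = ⊤, so RHS = ⊤
        rw [htop, hp] at ihx
        have h1 : ((l : ℝ) - 1 : ℝ) * 1 = l - 1 := by ring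
        have hrec : recFn f y = ⊤ := by
          have := top_le_iff.mp ihx
          have h2 : ((l - 1 : ℝ) : EReal) * recFn f y = ⊤ := ER.add_eq_top_left this
          exact ER.mul_eq_top_ne_bot hl1' (rec_ne_bot f ⟨hbot, x, hx⟩ y) h2
        rw [hrec, hp, EReal.mul_top_of_pos (by exact_mod_cast hl0),
          EReal.add_top_of_ne_bot (EReal.coe_ne_bot p)]
        exact le_top
      · have hstep := base 1 one_pos le_rfl (x + (l - 1) • y) htop
        rw [← hsplit] at hstep
        have hrne := rec_ne_bot f ⟨hbot, x, hx⟩ y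
        calc f (x + l • y) ≤ f (x + (l - 1) • y) + (1 : EReal) * recFn f y := by
              exact_mod_cast hstep
          _ ≤ (f x + ((l - 1 : ℝ) : EReal) * recFn f y) + (1 : EReal) * recFn f y :=
              add_le_add ihx le_rfl
          _ = f x + (l : EReal) * recFn f y := by
            rw [add_assoc]
            congr 1
            rw [← EReal.right_distrib_of_nonneg (by exact_mod_cast hl1'.le)
              (by norm_num), ← EReal.coe_one, ← EReal.coe_add]
            norm_num
  intro l hl0 x hx
  obtain ⟨n, hn⟩ := exists_nat_ge l
  exact main n l hl0 (by push_cast; linarith) x hx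

end Rec



section Persp
variable {G : Type*} [AddCommGroup G] [Module ℝ G] (f : G → EReal)

lemma persp_neg {p : ℝ × G} (h : p.1 < 0) : persp f p = ⊤ := by
  rw [persp, if_neg (by linarith), if_neg (by linarith)]

lemma persp_zero {p : ℝ × G} (h : p.1 = 0) : persp f p = recFn f p.2 := by
  rw [persp, if_neg (by rw [h]; exact lt_irrefl 0), if_pos h]

lemma persp_pos {p : ℝ × G} (h : 0 < p.1) :
    persp f p = (p.1 : EReal) * f (p.1⁻¹ • p.2) := by
  rw [persp, if_pos h]

lemma persp_ne_bot (hf : IsProperE f) (p : ℝ × G) : persp f p ≠ ⊥ := by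
  rcases lt_trichotomy p.1 0 with h | h | h
  · rw [persp_neg f h]; exact top_ne_bot
  · rw [persp_zero f h]; exact rec_ne_bot f hf p.2
  · rw [persp_pos f h]; exact ER.mul_ne_bot (le_of_lt h) (hf.1 _)

lemma persp_mixed (hf : IsProperE f) (hconv : ConvexE G f)
    (y₁ y₂ : G) (a b η₂ : ℝ) (ha : 0 < a) (hb : 0 < b) (hη₂ : 0 < η₂) :
    persp f (b * η₂, a • y₁ + b • y₂) ≤
      (a : EReal) * recFn f y₁ + (b : EReal) * ((η₂ : EReal) * f (η₂⁻¹ • y₂)) := by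
  have hbot := hf.1
  set η : ℝ := b * η₂ with hη
  have hη0 : 0 < η := mul_pos hb hη₂
  have hz : η⁻¹ • (a • y₁ + b • y₂) = (η₂⁻¹ • y₂) + (a / η) • y₁ := by
    rw [smul_add, smul_smul, smul_smul, add_comm]
    congr 2
    · field_simp; exact hη.symm
    · rw [hη]; field_simp
  set z := η₂⁻¹ • y₂ with hzdef
  have hLHS : persp f (η, a • y₁ + b • y₂) = (η : EReal) * f (z + (a / η) • y₁) := by
    rw [persp_pos f (by exact hη0), hz]
  by_cases hzt : f z = ⊤
  · rw [hzt, EReal.mul_top_of_pos (by exact_mod_cast hη₂),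
      EReal.mul_top_of_pos (by exact_mod_cast hb),
      EReal.add_top_of_ne_bot (ER.mul_ne_bot ha.le (rec_ne_bot f hf y₁))]
    exact le_top
  · have key := rec_smul_bound f hbot hconv y₁ (a / η) (div_pos ha hη0) z hzt
    have step1 : persp f (η, a • y₁ + b • y₂) ≤
        (η : EReal) * (f z + ((a / η : ℝ) : EReal) * recFn f y₁) := by
      rw [hLHS]; exact ER.mul_le hη0.le key
    have hrne := rec_ne_bot f hf y₁
    have step2 : (η : EReal) * (f z + ((a / η : ℝ) : EReal) * recFn f y₁) =
        (a : EReal) * recFn f y₁ + (b : EReal) * ((η₂ : EReal) * f z) := by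
      rw [ER.distrib hη0.le (hbot z) (ER.mul_ne_bot (div_pos ha hη0).le hrne)]
      rw [← mul_assoc, ← EReal.coe_mul, ← mul_assoc, ← EReal.coe_mul]
      rw [show η * (a / η) = a from by field_simp, show b * η₂ = η from rfl]
      exact add_comm _ _
    exact step1.trans (le_of_eq step2)

lemma rec_convex (hf : IsProperE f) (hconv : ConvexE G f) (y₁ y₂ : G) (a b : ℝ)
    (ha : 0 ≤ a) (hb : 0 ≤ b) (hab : a + b = 1) :
    recFn f (a • y₁ + b • y₂) ≤
      (a : EReal) * recFn f y₁ + (b : EReal) * recFn f y₂ := by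
  have hbot := hf.1
  apply iSup_le
  rintro ⟨x, hx⟩
  obtain ⟨p, hp⟩ := ER.real_of _ (hbot x) hx
  have harg : x + (a • y₁ + b • y₂) = a • (x + y₁) + b • (x + y₂) := by
    rw [smul_add, smul_add, add_add_add_comm, ← add_smul, hab, one_smul]
  have c := hconv (x + y₁) (x + y₂) a b ha hb hab
  have b1 : f (x + y₁) ≤ (p : EReal) + recFn f y₁ := by
    rw [← hp]; exact le_add_rec f hbot y₁ x hx
  have b2 : f (x + y₂) ≤ (p : EReal) + recFn f y₂ := by
    rw [← hp]; exact le_add_rec f hbot y₂ x hx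
  have hr1 := rec_ne_bot f hf y₁
  have hr2 := rec_ne_bot f hf y₂
  simp only [hp]
  rw [EReal.sub_le_iff_le_add (Or.inl (EReal.coe_ne_bot p)) (Or.inl (EReal.coe_ne_top p))]
  calc f (x + (a • y₁ + b • y₂)) = f (a • (x + y₁) + b • (x + y₂)) := by rw [harg]
    _ ≤ (a : EReal) * f (x + y₁) + (b : EReal) * f (x + y₂) := c
    _ ≤ (a : EReal) * ((p : EReal) + recFn f y₁) +
        (b : EReal) * ((p : EReal) + recFn f y₂) :=
        add_le_add (ER.mul_le ha b1) (ER.mul_le hb b2)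
    _ = ((a : EReal) * p + (a : EReal) * recFn f y₁) +
        ((b : EReal) * p + (b : EReal) * recFn f y₂) := by
        rw [ER.distrib ha (EReal.coe_ne_bot p) hr1, ER.distrib hb (EReal.coe_ne_bot p) hr2]
    _ = ((a : EReal) * recFn f y₁ + (b : EReal) * recFn f y₂) +
        ((a : EReal) * p + (b : EReal) * p) := by abel
    _ = (a : EReal) * recFn f y₁ + (b : EReal) * recFn f y₂ + (p : EReal) := by
        rw [← EReal.coe_mul, ← EReal.coe_mul, ← EReal.coe_add]
        congr 2
        linear_combination p * hab

lemma persp_pospos (hf : IsProperE f) (hconv : ConvexE G f)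
    (y₁ y₂ : G) (a b η₁ η₂ : ℝ) (ha : 0 < a) (hb : 0 < b)
    (h1 : 0 < η₁) (h2 : 0 < η₂) (hab : a + b = 1) :
    persp f (a * η₁ + b * η₂, a • y₁ + b • y₂) ≤
      (a : EReal) * ((η₁ : EReal) * f (η₁⁻¹ • y₁)) +
      (b : EReal) * ((η₂ : EReal) * f (η₂⁻¹ • y₂)) := by
  have hbot := hf.1
  set η : ℝ := a * η₁ + b * η₂ with hηdef
  have hη : 0 < η := by positivity
  set c₁ : ℝ := a * η₁ / η with hc1
  set c₂ : ℝ := b * η₂ / η with hc2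
  have hc10 : 0 ≤ c₁ := by positivity
  have hc20 : 0 ≤ c₂ := by positivity
  have hc12 : c₁ + c₂ = 1 := by rw [hc1, hc2]; field_simp; exact hηdef.symm
  have harg : η⁻¹ • (a • y₁ + b • y₂) = c₁ • (η₁⁻¹ • y₁) + c₂ • (η₂⁻¹ • y₂) := by
    rw [smul_add, smul_smul, smul_smul, smul_smul, smul_smul]
    congr 1
    · congr 1; rw [hc1]; field_simp
    · congr 1; rw [hc2]; field_simp
  have c := hconv (η₁⁻¹ • y₁) (η₂⁻¹ • y₂) c₁ c₂ hc10 hc20 hc12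
  rw [persp_pos f (show (0:ℝ) < (η, a • y₁ + b • y₂).1 from hη)]
  simp only
  rw [harg]
  calc (η : EReal) * f (c₁ • (η₁⁻¹ • y₁) + c₂ • (η₂⁻¹ • y₂))
      ≤ (η : EReal) * ((c₁ : EReal) * f (η₁⁻¹ • y₁) + (c₂ : EReal) * f (η₂⁻¹ • y₂)) :=
        ER.mul_le hη.le c
    _ = (η : EReal) * ((c₁ : EReal) * f (η₁⁻¹ • y₁)) +
        (η : EReal) * ((c₂ : EReal) * f (η₂⁻¹ • y₂)) :=
        ER.distrib hη.le (ER.mul_ne_bot hc10 (hbot _)) (ER.mul_ne_bot hc20 (hbot _))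
    _ = (a : EReal) * ((η₁ : EReal) * f (η₁⁻¹ • y₁)) +
        (b : EReal) * ((η₂ : EReal) * f (η₂⁻¹ • y₂)) := by
        rw [← mul_assoc, ← mul_assoc, ← EReal.coe_mul, ← EReal.coe_mul,
          ← mul_assoc, ← mul_assoc, ← EReal.coe_mul, ← EReal.coe_mul,
          show η * c₁ = a * η₁ from by rw [hc1]; field_simp,
          show η * c₂ = b * η₂ from by rw [hc2]; field_simp]

lemma persp_convexE (hf : IsProperE f) (hconv : ConvexE G f) :
    ConvexE (ℝ × G) (persp f) := by
  have hbot := hf.1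
  rintro ⟨η₁, y₁⟩ ⟨η₂, y₂⟩ a b ha hb hab
  have hcombo : a • ((η₁ : ℝ), y₁) + b • ((η₂ : ℝ), y₂)
      = (a * η₁ + b * η₂, a • y₁ + b • y₂) := by
    simp [Prod.ext_iff, smul_eq_mul]
  rw [hcombo]
  rcases eq_or_lt_of_le ha with rfl | ha'
  · have hb1 : b = 1 := by linarith
    subst hb1
    simp only [zero_mul, one_mul, mul_zero, zero_smul, one_smul, zero_add, add_zero,
      EReal.coe_zero, EReal.coe_one]
    exact le_rfl
  rcases eq_or_lt_of_le hb with rfl | hb'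
  · have ha1 : a = 1 := by linarith
    subst ha1
    simp only [zero_mul, one_mul, mul_zero, zero_smul, one_smul, zero_add, add_zero,
      EReal.coe_zero, EReal.coe_one]
    exact le_rfl
  have htopL : ∀ {P Q : EReal}, Q ≠ ⊥ → P = ⊤ →
      ((a : EReal) * P + (b : EReal) * Q = ⊤) := by
    intro P Q hQ hP
    rw [hP, EReal.mul_top_of_pos (by exact_mod_cast ha'),
      EReal.top_add_of_ne_bot (ER.mul_ne_bot hb hQ)]
  have htopR : ∀ {P Q : EReal}, P ≠ ⊥ → Q = ⊤ →
      ((a : EReal) * P + (b : EReal) * Q = ⊤) := by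
    intro P Q hP hQ
    rw [hQ, EReal.mul_top_of_pos (by exact_mod_cast hb'),
      EReal.add_top_of_ne_bot (ER.mul_ne_bot ha hP)]
  rcases lt_trichotomy η₁ 0 with h1 | h1 | h1
  · rw [htopL (persp_ne_bot f hf (η₂, y₂)) (persp_neg f h1)]; exact le_top
  · -- η₁ = 0
    subst h1
    rcases lt_trichotomy η₂ 0 with h2 | h2 | h2
    · rw [htopR (persp_ne_bot f hf ((0:ℝ), y₁)) (persp_neg f h2)]; exact le_top
    · subst h2
      rw [persp_zero f (show ((a*(0:ℝ)+b*0 : ℝ), a • y₁ + b • y₂).1 = 0 by simp),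
        persp_zero f (show ((0:ℝ), y₁).1 = 0 from rfl),
        persp_zero f (show ((0:ℝ), y₂).1 = 0 from rfl)]
      exact rec_convex f hf hconv y₁ y₂ a b ha hb hab
    · have key := persp_mixed f hf hconv y₁ y₂ a b η₂ ha' hb' h2
      rw [persp_zero f (show ((0:ℝ), y₁).1 = 0 from rfl),
        persp_pos f (show (0:ℝ) < ((η₂ : ℝ), y₂).1 from h2),
        show a * 0 + b * η₂ = b * η₂ from by ring]
      exact key
  · rcases lt_trichotomy η₂ 0 with h2 | h2 | h2
    · rw [htopR (persp_ne_bot f hf ((η₁:ℝ), y₁)) (persp_neg f h2)]; exact le_top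
    · subst h2
      have key := persp_mixed f hf hconv y₂ y₁ b a η₁ hb' ha' h1
      rw [persp_zero f (show ((0:ℝ), y₂).1 = 0 from rfl),
        persp_pos f (show (0:ℝ) < ((η₁ : ℝ), y₁).1 from h1),
        show a * η₁ + b * 0 = a * η₁ from by ring,
        show a • y₁ + b • y₂ = b • y₂ + a • y₁ from add_comm _ _]
      exact key.trans (le_of_eq (add_comm _ _))
    · have key := persp_pospos f hf hconv y₁ y₂ a b η₁ η₂ ha' hb' h1 h2 hab
      rw [persp_pos f (show (0:ℝ) < ((η₁ : ℝ), y₁).1 from h1),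
        persp_pos f (show (0:ℝ) < ((η₂ : ℝ), y₂).1 from h2)]
      exact key

end Persp

section PerspTop
variable {G : Type*} [NormedAddCommGroup G] [NormedSpace ℝ G] (f : G → EReal)

lemma persp_lsc (hf : IsProperE f) (hlsc : LowerSemicontinuous f) (hconv : ConvexE G f) :
    LowerSemicontinuous (persp f) := by
  have hbot := hf.1
  intro p c hc
  rcases lt_trichotomy p.1 0 with h | h | h
  · -- negative: perspective is ⊤ on a neighborhood
    have hcT : c < ⊤ := by rw [persp_neg f h] at hc; exact hc
    have hopen : IsOpen {q : ℝ × G | q.1 < 0} := isOpen_lt continuous_fst continuous_const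
    filter_upwards [hopen.mem_nhds h] with q hq
    rw [persp_neg f hq]; exact hcT
  · -- zero
    rw [persp_zero f h] at hc
    rcases eq_or_ne c ⊥ with rfl | hcbot
    · filter_upwards with q
      exact bot_lt_iff_ne_bot.mpr (persp_ne_bot f hf q)
    have hcT : c ≠ ⊤ := (hc.trans_le le_top).ne
    obtain ⟨creal, rfl⟩ := ER.real_of c hcbot hcT
    obtain ⟨⟨x₀, hx₀⟩, hx⟩ := lt_iSup_iff.mp hc
    simp only at hx
    obtain ⟨r₀, hr₀⟩ := ER.real_of _ (hbot x₀) hx₀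
    rw [hr₀] at hx
    have hkey : ((creal + r₀ : ℝ) : EReal) < f (x₀ + p.2) := by
      push_cast
      exact (EReal.lt_sub_iff_add_lt (Or.inl (EReal.coe_ne_bot r₀))
        (Or.inl (EReal.coe_ne_top r₀))).mp hx
    obtain ⟨q, hq1, hq2⟩ := EReal.exists_between_coe_real hkey
    -- continuous map w ↦ (1 - w.1) • x₀ + w.2
    have hcont : Continuous (fun w : ℝ × G => (1 - w.1) • x₀ + w.2) :=
      ((continuous_const.sub continuous_fst).smul continuous_const).add continuous_snd
    have hℓp : (1 - p.1) • x₀ + p.2 = x₀ + p.2 := by rw [h]; norm_num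
    have event₁ : ∀ᶠ w : ℝ × G in nhds p, (q : EReal) < f ((1 - w.1) • x₀ + w.2) := by
      have := hlsc (x₀ + p.2) q hq2
      have := (hcont.tendsto p).eventually (by rw [hℓp]; exact this)
      exact this
    have event₂ : ∀ᶠ w : ℝ × G in nhds p, w.1 < 1 ∧ creal + (1 - w.1) * r₀ < q := by
      have hopen : IsOpen {t : ℝ | t < 1 ∧ creal + (1 - t) * r₀ < q} := by
        apply IsOpen.inter (isOpen_lt continuous_id continuous_const)
        exact isOpen_lt (continuous_const.add ((continuous_const.sub continuous_id).mul continuous_const)) continuous_const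
      have hmem : p.1 ∈ {t : ℝ | t < 1 ∧ creal + (1 - t) * r₀ < q} := by
        constructor
        · rw [h]; norm_num
        · rw [h]; simpa using (by exact_mod_cast hq1 : creal + r₀ < q)
      exact (continuous_fst.tendsto p).eventually (hopen.eventually_mem hmem)
    filter_upwards [event₁, event₂] with w hw1 hw2
    rcases lt_trichotomy w.1 0 with hw | hw | hw
    · rw [persp_neg f hw]; exact EReal.coe_lt_top creal
    · rw [persp_zero f hw]
      have : ((creal + r₀ : ℝ) : EReal) < f (x₀ + w.2) := by
        rw [show x₀ + w.2 = (1 - w.1) • x₀ + w.2 from by rw [hw]; norm_num]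
        calc ((creal + r₀ : ℝ) : EReal) ≤ (q : EReal) := by
              have : creal + r₀ < q := by
                have := hw2.2; rw [hw] at this; simpa using this
              exact_mod_cast this.le
          _ < _ := hw1
      have hlt : (creal : EReal) < f (x₀ + w.2) - (r₀ : EReal) := by
        rw [EReal.lt_sub_iff_add_lt (Or.inl (EReal.coe_ne_bot r₀))
          (Or.inl (EReal.coe_ne_top r₀))]
        push_cast at this ⊢
        exact this
      exact hlt.trans_le (by rw [← hr₀]; exact rec_ge f w.2 x₀ hx₀)
    · rw [persp_pos f hw]
      have harg : (1 - w.1) • x₀ + w.1 • (w.1⁻¹ • w.2) = (1 - w.1) • x₀ + w.2 := by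
        rw [smul_smul, mul_inv_cancel₀ hw.ne', one_smul]
      have c1 := hconv x₀ (w.1⁻¹ • w.2) (1 - w.1) w.1 (by linarith [hw2.1]) hw.le (by ring)
      rw [harg, hr₀] at c1
      set d : ℝ := (1 - w.1) * r₀ with hd
      have hqlt : (q : EReal) < (w.1 : EReal) * f (w.1⁻¹ • w.2) + (d : EReal) := by
        calc (q : EReal) < f ((1 - w.1) • x₀ + w.2) := hw1
          _ ≤ ((1 - w.1 : ℝ) : EReal) * (r₀ : EReal) + (w.1 : EReal) * f (w.1⁻¹ • w.2) := c1
          _ = (w.1 : EReal) * f (w.1⁻¹ • w.2) + (d : EReal) := by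
              rw [← EReal.coe_mul, add_comm]
      have h1 : (q : EReal) - (d : EReal) < (w.1 : EReal) * f (w.1⁻¹ • w.2) :=
        EReal.sub_lt_of_lt_add hqlt
      have h2 : (creal : EReal) < (q : EReal) - (d : EReal) := by
        rw [EReal.lt_sub_iff_add_lt (Or.inl (EReal.coe_ne_bot d))
          (Or.inl (EReal.coe_ne_top d))]
        exact_mod_cast hw2.2
      exact h2.trans h1
  · -- positive
    rw [persp_pos f h] at hc
    rcases eq_or_ne c ⊥ with rfl | hcbot
    · have hopen : IsOpen {q : ℝ × G | 0 < q.1} := isOpen_lt continuous_const continuous_fst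
      filter_upwards [hopen.mem_nhds h] with q hq
      rw [persp_pos f hq]
      exact bot_lt_iff_ne_bot.mpr (ER.mul_ne_bot hq.le (hbot _))
    have hcT : c ≠ ⊤ := (hc.trans_le le_top).ne
    obtain ⟨creal, rfl⟩ := ER.real_of c hcbot hcT
    -- choose m with m < f(p.1⁻¹ • p.2) and creal < p.1 * m
    obtain ⟨m, hm, hcm⟩ : ∃ m : ℝ, (m : EReal) < f (p.1⁻¹ • p.2) ∧ creal < p.1 * m := by
      rcases eq_or_ne (f (p.1⁻¹ • p.2)) ⊤ with hF | hF
      · refine ⟨creal / p.1 + 1, ?_, ?_⟩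
        · rw [hF]; exact EReal.coe_lt_top _
        · rw [mul_add, mul_div_cancel₀ _ h.ne', mul_one]; linarith
      · obtain ⟨F₀, hF₀⟩ := ER.real_of _ (hbot _) hF
        rw [hF₀] at hc ⊢
        rw [← EReal.coe_mul, gt_iff_lt, EReal.coe_lt_coe_iff] at hc
        obtain ⟨m, hm1, hm2⟩ := exists_between (by
          have : creal / p.1 < F₀ := by rw [div_lt_iff₀ h]; linarith [mul_comm F₀ p.1]
          exact this)
        exact ⟨m, by exact_mod_cast hm2, (div_lt_iff₀' h).mp hm1⟩
    have hcont : ContinuousAt (fun q : ℝ × G => q.1⁻¹ • q.2) p := by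
      exact (continuousAt_fst.inv₀ h.ne').smul continuousAt_snd
    have event₁ : ∀ᶠ q : ℝ × G in nhds p, (m : EReal) < f (q.1⁻¹ • q.2) :=
      hcont.tendsto.eventually (hlsc (p.1⁻¹ • p.2) m hm)
    have event₂ : ∀ᶠ q : ℝ × G in nhds p, 0 < q.1 ∧ creal < q.1 * m := by
      have hopen : IsOpen {t : ℝ | 0 < t ∧ creal < t * m} :=
        (isOpen_lt continuous_const continuous_id).inter
          (isOpen_lt continuous_const (continuous_id.mul continuous_const))
      exact (continuous_fst.tendsto p).eventually (hopen.eventually_mem ⟨h, hcm⟩)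
    filter_upwards [event₁, event₂] with q hq1 hq2
    rw [persp_pos f hq2.1]
    rcases eq_or_ne (f (q.1⁻¹ • q.2)) ⊤ with hF | hF
    · rw [hF, EReal.mul_top_of_pos (by exact_mod_cast hq2.1)]
      exact EReal.coe_lt_top creal
    · obtain ⟨v, hv⟩ := ER.real_of _ (hbot _) hF
      rw [hv] at hq1 ⊢
      rw [← EReal.coe_mul, gt_iff_lt, EReal.coe_lt_coe_iff]
      rw [EReal.coe_lt_coe_iff] at hq1
      nlinarith [hq2.1, hq2.2]

end PerspTop

section Comp
variable {G : Type*} [NormedAddCommGroup G] [NormedSpace ℝ G]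
variable (φ : G → ℝ)

lemma ER.coe_sub_self (r : ℝ) : (r : EReal) - (r : EReal) = 0 := by
  rw [← EReal.coe_sub]; norm_num

lemma phi_zero (hpos : ∀ lam : ℝ, 0 < lam → ∀ y : G, φ (lam • y) = lam * φ y) :
    φ 0 = 0 := by
  have := hpos 2 two_pos 0
  rw [smul_zero] at this
  linarith

lemma phi_subadd (hconv : ConvexOn ℝ Set.univ φ)
    (hpos : ∀ lam : ℝ, 0 < lam → ∀ y : G, φ (lam • y) = lam * φ y) (x y : G) :
    φ (x + y) ≤ φ x + φ y := by
  have h := hconv.2 (Set.mem_univ x) (Set.mem_univ y)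
    (by norm_num : (0:ℝ) ≤ 1/2) (by norm_num : (0:ℝ) ≤ 1/2) (by norm_num)
  have harg : x + y = (2 : ℝ) • ((1/2 : ℝ) • x + (1/2 : ℝ) • y) := by
    rw [smul_add, smul_smul, smul_smul]; norm_num
  rw [harg, hpos 2 two_pos]
  simp only [smul_eq_mul] at h
  linarith

lemma range_scale (hpos : ∀ lam : ℝ, 0 < lam → ∀ y : G, φ (lam • y) = lam * φ y)
    {r lam : ℝ} (hl : 0 ≤ lam) (hr : r ∈ Set.range φ) : lam * r ∈ Set.range φ := by
  obtain ⟨u, rfl⟩ := hr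
  rcases eq_or_lt_of_le hl with rfl | hl'
  · rw [zero_mul]; exact ⟨0, phi_zero φ hpos⟩
  · exact ⟨lam • u, hpos lam hl' u⟩

lemma range_interval (hconv : ConvexOn ℝ Set.univ φ) {s t r : ℝ}
    (hs : s ∈ Set.range φ) (ht : t ∈ Set.range φ) (h1 : s ≤ r) (h2 : r ≤ t) :
    r ∈ Set.range φ := by
  obtain ⟨u, rfl⟩ := hs
  obtain ⟨v, rfl⟩ := ht
  have hg : ConvexOn ℝ Set.univ (φ ∘ (AffineMap.lineMap u v : ℝ →ᵃ[ℝ] G)) := by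
    have := hconv.comp_affineMap (AffineMap.lineMap u v : ℝ →ᵃ[ℝ] G)
    rwa [Set.preimage_univ] at this
  have hcont : Continuous (φ ∘ (AffineMap.lineMap u v : ℝ →ᵃ[ℝ] G)) :=
    hg.locallyLipschitz.continuous
  have hIVT := intermediate_value_Icc (by norm_num : (0:ℝ) ≤ 1) hcont.continuousOn
  have : r ∈ Set.Icc ((φ ∘ (AffineMap.lineMap u v : ℝ →ᵃ[ℝ] G)) 0)
      ((φ ∘ (AffineMap.lineMap u v : ℝ →ᵃ[ℝ] G)) 1) := by
    simp only [Function.comp_apply, AffineMap.lineMap_apply_zero, AffineMap.lineMap_apply_one]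
    exact ⟨h1, h2⟩
  obtain ⟨θ, _, hθ⟩ := hIVT this
  exact ⟨_, hθ⟩

lemma range_add (hconv : ConvexOn ℝ Set.univ φ)
    (hpos : ∀ lam : ℝ, 0 < lam → ∀ y : G, φ (lam • y) = lam * φ y)
    {s t : ℝ} (hs : s ∈ Set.range φ) (ht : t ∈ Set.range φ) :
    s + t ∈ Set.range φ := by
  rcases le_total 0 s with h0s | h0s
  · rcases le_total 0 t with h0t | h0t
    · -- both nonneg
      rcases le_total s t with hst | hst
      · rcases eq_or_lt_of_le h0t with h | ht'
        · have hs0 : s = 0 := le_antisymm (h ▸ hst) h0s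
          rw [hs0, zero_add]; exact ht
        · have := range_scale φ hpos (by positivity : (0:ℝ) ≤ (s + t) / t) ht
          rwa [div_mul_cancel₀ _ ht'.ne'] at this
      · rcases eq_or_lt_of_le h0s with h | hs'
        · have ht0 : t = 0 := le_antisymm (hst.trans (le_of_eq h.symm)) h0t
          rw [ht0, add_zero]; exact hs
        · have := range_scale φ hpos (by positivity : (0:ℝ) ≤ (s + t) / s) hs
          rwa [div_mul_cancel₀ _ hs'.ne'] at this
    · -- s ≥ 0 ≥ t : s + t ∈ [t, s]
      exact range_interval φ hconv ht hs (by linarith) (by linarith)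
  · rcases le_total 0 t with h0t | h0t
    · exact range_interval φ hconv hs ht (by linarith) (by linarith)
    · -- both nonpos
      rcases eq_or_lt_of_le h0s with h | hs'
      · rw [h, zero_add]; exact ht
      · have hnn : 0 ≤ (s + t) / s := div_nonneg_iff.mpr (Or.inr ⟨by linarith, hs'.le⟩)
        have := range_scale φ hpos hnn hs
        rwa [div_mul_cancel₀ _ hs'.ne] at this

end Comp

section Main
variable {G : Type*} [NormedAddCommGroup G] [NormedSpace ℝ G]
variable (φ : G → ℝ) (ϕ : ℝ → EReal)

lemma comp_lsc (hlscφ : LowerSemicontinuous φ) (hlscϕ : LowerSemicontinuous ϕ)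
    (hinc : ∀ s t : ℝ, s ∈ Set.range φ → t ∈ Set.range φ → s ≤ t → ϕ s ≤ ϕ t) :
    LowerSemicontinuous (fun y => ϕ (φ y)) := by
  intro x c hc
  have h1 := hlscϕ (φ x) c hc
  obtain ⟨ε, hε, hball⟩ := Metric.eventually_nhds_iff.mp h1
  have h2 := hlscφ x (φ x - ε) (by linarith)
  filter_upwards [h2] with z hz
  rcases lt_or_ge (φ z) (φ x) with hzx | hzx
  · exact hball (by rw [Real.dist_eq, abs_lt]; constructor <;> linarith)
  · exact hc.trans_le (hinc (φ x) (φ z) ⟨x, rfl⟩ ⟨z, rfl⟩ hzx)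

lemma comp_convex (hconv : ConvexOn ℝ Set.univ φ)
    (hpos : ∀ lam : ℝ, 0 < lam → ∀ y : G, φ (lam • y) = lam * φ y)
    (hϕconv : ConvexE ℝ ϕ)
    (hinc : ∀ s t : ℝ, s ∈ Set.range φ → t ∈ Set.range φ → s ≤ t → ϕ s ≤ ϕ t) :
    ConvexE G (fun y => ϕ (φ y)) := by
  intro x y a b ha hb hab
  have key1 : φ (a • x + b • y) ≤ a * φ x + b * φ y := by
    have := hconv.2 (Set.mem_univ x) (Set.mem_univ y) ha hb hab
    simpa [smul_eq_mul] using this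
  have mem2 : a * φ x + b * φ y ∈ Set.range φ :=
    range_add φ hconv hpos (range_scale φ hpos ha ⟨x, rfl⟩) (range_scale φ hpos hb ⟨y, rfl⟩)
  have step1 : ϕ (φ (a • x + b • y)) ≤ ϕ (a * φ x + b * φ y) :=
    hinc _ _ ⟨a • x + b • y, rfl⟩ mem2 key1
  have step2 : ϕ (a * φ x + b * φ y) ≤ (a : EReal) * ϕ (φ x) + (b : EReal) * ϕ (φ y) := by
    have := hϕconv (φ x) (φ y) a b ha hb hab
    simpa [smul_eq_mul] using this
  exact step1.trans step2

lemma rec_comp_eq (hlscφ : LowerSemicontinuous φ) (hconv : ConvexOn ℝ Set.univ φ)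
    (hpos : ∀ lam : ℝ, 0 < lam → ∀ y : G, φ (lam • y) = lam * φ y)
    (hϕ : IsProperE ϕ) (hϕconv : ConvexE ℝ ϕ)
    (hinc : ∀ s t : ℝ, s ∈ Set.range φ → t ∈ Set.range φ → s ≤ t → ϕ s ≤ ϕ t)
    (h0 : ϕ 0 ≠ ⊤) (y : G) :
    recFn (fun w => ϕ (φ w)) y = recFn ϕ (φ y) := by
  have hbot := hϕ.1
  have hzero := phi_zero φ hpos
  obtain ⟨p0, hp0⟩ := ER.real_of _ (hbot 0) h0
  apply le_antisymm
  · -- ≤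
    apply iSup_le
    rintro ⟨x, hx⟩
    simp only
    have h1 : ϕ (φ (x + y)) ≤ ϕ (φ x + φ y) :=
      hinc _ _ ⟨x + y, rfl⟩ (range_add φ hconv hpos ⟨x, rfl⟩ ⟨y, rfl⟩)
        (phi_subadd φ hconv hpos x y)
    calc ϕ (φ (x + y)) - ϕ (φ x) ≤ ϕ (φ x + φ y) - ϕ (φ x) :=
          EReal.sub_le_sub h1 le_rfl
      _ ≤ recFn ϕ (φ y) :=
          le_iSup (fun z : {s : ℝ // ϕ s ≠ ⊤} => ϕ ((z : ℝ) + φ y) - ϕ (z : ℝ)) ⟨φ x, hx⟩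
  · -- ≥
    apply iSup_le
    rintro ⟨s, hs⟩
    simp only
    obtain ⟨ps, hps⟩ := ER.real_of _ (hbot s) hs
    set t : ℝ := φ y with htdef
    -- the "same sign" construction
    have hsame : ∀ (hc : 0 ≤ s / t) (ht0 : t ≠ 0) (hc2 : 0 < (s + t) / t),
        ϕ (s + t) - ϕ s ≤ recFn (fun w => ϕ (φ w)) y := by
      intro hc ht0 hc2
      set x : G := (s / t) • y with hxdef
      have hφx : φ x = s := by
        rcases eq_or_lt_of_le hc with h | h
        · rw [hxdef, ← h, zero_smul, hzero]
          have : s / t = 0 := h.symm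
          field_simp at this
          exact (mul_zero t ▸ this).symm
        · rw [hxdef, hpos _ h, div_mul_cancel₀ _ ht0]
      have hφxy : φ (x + y) = s + t := by
        have : x + y = ((s + t) / t) • y := by
          rw [hxdef, show (s / t) • y + y = (s / t + 1) • y from by rw [add_smul, one_smul]]
          congr 1
          field_simp
        rw [this, hpos _ hc2, div_mul_cancel₀ _ ht0]
      have hidx : ϕ (φ x) ≠ ⊤ := by rw [hφx]; exact hs
      have := le_iSup (fun z : {w : G // ϕ (φ w) ≠ ⊤} =>
        ϕ (φ ((z : G) + y)) - ϕ (φ (z : G))) ⟨x, hidx⟩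
      simp only at this
      rw [hφxy, hφx] at this
      exact this
    -- the "opposite sign" bound via x = 0
    have hopp : ϕ (s + t) + (p0 : EReal) ≤ ϕ t + (ps : EReal) →
        ϕ (s + t) - ϕ s ≤ recFn (fun w => ϕ (φ w)) y := by
      intro four
      have step_a : ϕ (s + t) ≤ (ϕ t + (ps : EReal)) - (p0 : EReal) :=
        (EReal.le_sub_iff_add_le (Or.inl (EReal.coe_ne_bot p0))
          (Or.inl (EReal.coe_ne_top p0))).mpr four
      have step_b : ϕ (s + t) - (ps : EReal) ≤ ((ϕ t + (ps : EReal)) - (p0 : EReal)) - (ps : EReal) :=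
        EReal.sub_le_sub step_a le_rfl
      have step_c : ((ϕ t + (ps : EReal)) - (p0 : EReal)) - (ps : EReal) = ϕ t - (p0 : EReal) := by
        rw [sub_eq_add_neg (ϕ t + (ps : EReal)), add_right_comm, ← sub_eq_add_neg,
          EReal.add_sub_cancel_right]
      have hterm : ϕ t - (p0 : EReal) ≤ recFn (fun w => ϕ (φ w)) y := by
        have hidx : ϕ (φ (0 : G)) ≠ ⊤ := by rw [hzero]; exact h0
        have := le_iSup (fun z : {w : G // ϕ (φ w) ≠ ⊤} =>
          ϕ (φ ((z : G) + y)) - ϕ (φ (z : G))) ⟨0, hidx⟩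
        simp only [zero_add] at this
        rw [hzero, hp0] at this
        exact this
      rw [hps]
      calc ϕ (s + t) - (ps : EReal) ≤ ϕ t - (p0 : EReal) := step_c ▸ step_b
        _ ≤ _ := hterm
    rcases lt_trichotomy t 0 with ht | ht | ht
    · rcases le_or_gt s 0 with hs0 | hs0
      · exact hsame (div_nonneg_iff.mpr (Or.inr ⟨hs0, ht.le⟩)) ht.ne
          (div_pos_iff.mpr (Or.inr ⟨by linarith, ht⟩))
      · -- 0 < s, t < 0 : opposite
        apply hopp
        have four := fourpoint ϕ hbot hϕconv t 0 s (by linarith) (by linarith)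
        rw [zero_add, add_comm t s, hps] at four
        calc ϕ (s + t) + (p0 : EReal) = ϕ (s + t) + ϕ 0 := by rw [hp0]
          _ ≤ (ps : EReal) + ϕ t := four
          _ = ϕ t + (ps : EReal) := add_comm _ _
    · -- t = 0
      rw [ht, add_zero, hps, ER.coe_sub_self]
      have hidx : ϕ (φ (0 : G)) ≠ ⊤ := by rw [hzero]; exact h0
      have := le_iSup (fun z : {w : G // ϕ (φ w) ≠ ⊤} =>
        ϕ (φ ((z : G) + y)) - ϕ (φ (z : G))) ⟨0, hidx⟩
      simp only [zero_add] at this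
      rw [hzero, hp0, ← htdef, ht, hp0, ER.coe_sub_self] at this
      exact this
    · rcases le_or_gt 0 s with hs0 | hs0
      · exact hsame (div_nonneg hs0 ht.le) ht.ne' (div_pos (by linarith) ht)
      · -- s < 0 < t : opposite
        apply hopp
        have four := fourpoint ϕ hbot hϕconv s 0 t hs0.le ht.le
        rw [zero_add, hps, hp0] at four
        exact four

end Main

/-- if `φ ∈ Γ₀(𝒢)` is positively homogeneous with full domain
(hence real-valued) and `ϕ ∈ Γ₀(ℝ)` is increasing on the range of `φ` with
`0 ∈ dom ϕ`, then `ϕ ∘ φ ∈ Γ₀(𝒢)`, its perspective is in `Γ₀(ℝ ⊕ 𝒢)` and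
`[ϕ ∘ φ]~(η, y) = ϕ̃(η, φ(y))`. -/
theorem perspective_of_composition
    {G : Type*} [NormedAddCommGroup G] [InnerProductSpace ℝ G] [CompleteSpace G]
    (φ : G → ℝ) (hlsc : LowerSemicontinuous φ) (hconv : ConvexOn ℝ Set.univ φ)
    (hpos : ∀ lam : ℝ, 0 < lam → ∀ y : G, φ (lam • y) = lam * φ y)
    (ϕ : ℝ → EReal) (hϕ : Gamma0 ℝ ϕ)
    (hinc : ∀ s t : ℝ, s ∈ Set.range φ → t ∈ Set.range φ → s ≤ t → ϕ s ≤ ϕ t)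
    (h0 : ϕ 0 ≠ ⊤) :
    Gamma0 G (fun y => ϕ (φ y)) ∧
    Gamma0 (ℝ × G) (persp (fun y => ϕ (φ y))) ∧
    ∀ (η : ℝ) (y : G),
      persp (fun w => ϕ (φ w)) (η, y) = persp ϕ (η, φ y) := by
  have hzero := phi_zero φ hpos
  have hfprop : IsProperE (fun y : G => ϕ (φ y)) :=
    ⟨fun y => hϕ.1.1 _, ⟨0, by simp only [hzero]; exact h0⟩⟩
  have hflsc : LowerSemicontinuous (fun y : G => ϕ (φ y)) := comp_lsc φ ϕ hlsc hϕ.2.1 hinc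
  have hfconv : ConvexE G (fun y : G => ϕ (φ y)) := comp_convex φ ϕ hconv hpos hϕ.2.2 hinc
  have h1 : Gamma0 G (fun y => ϕ (φ y)) := ⟨hfprop, hflsc, hfconv⟩
  refine ⟨h1, ?_, ?_⟩
  · refine ⟨⟨fun p => persp_ne_bot _ hfprop p, ⟨((1 : ℝ), (0 : G)), ?_⟩⟩,
      persp_lsc _ hfprop hflsc hfconv, persp_convexE _ hfprop hfconv⟩
    rw [persp_pos _ (show (0:ℝ) < ((1:ℝ), (0:G)).1 from one_pos)]
    simp only [inv_one, one_smul, smul_zero, EReal.coe_one, one_mul, hzero]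
    exact h0
  · intro η y
    rcases lt_trichotomy η 0 with h | h | h
    · rw [persp_neg _ (show ((η : ℝ), y).1 < 0 from h),
        persp_neg _ (show ((η : ℝ), φ y).1 < 0 from h)]
    · rw [persp_zero _ (show ((η : ℝ), y).1 = 0 from h),
        persp_zero _ (show ((η : ℝ), φ y).1 = 0 from h)]
      exact rec_comp_eq φ ϕ hlsc hconv hpos hϕ.1 hϕ.2.2 hinc h0 y
    · rw [persp_pos _ (show (0:ℝ) < ((η : ℝ), y).1 from h),
        persp_pos _ (show (0:ℝ) < ((η : ℝ), φ y).1 from h)]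
      simp only [smul_eq_mul]
      rw [hpos η⁻¹ (inv_pos.mpr h) y]

end
end

section
/- Let 𝒢 be a real Hilbert space, let φ ∈ Γ₀(𝒢), let ψ ∈ Γ₀(𝒢) be a positively homogeneous function such that dom φ ∩ dom ψ ≠ ∅, and let δ ∈ ℝ. Then the perspective of φ + ψ + δ belongs to Γ₀(ℝ ⊕ 𝒢) and satisfies, for every η ∈ ℝ and y ∈ 𝒢, [φ + ψ + δ]~(η, y) = φ̃(η, y) + ψ(y) + δη. -/
open scoped RealInnerProductSpace Classical

noncomputable section

section
set_option linter.unusedSectionVars false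
open Filter Topology
namespace StatementEleven

/-- positive real times non-bot is non-bot -/
lemma mul_ne_bot_of_pos {c : ℝ} (hc : 0 < c) {a : EReal} (ha : a ≠ ⊥) :
    (c : EReal) * a ≠ ⊥ := by
  induction a with
  | bot => exact absurd rfl ha
  | coe a => rw [← EReal.coe_mul]; exact EReal.coe_ne_bot _
  | top => rw [EReal.coe_mul_top_of_pos hc]; simp

lemma mul_eq_top_iff_of_pos {c : ℝ} (hc : 0 < c) {a : EReal} :
    (c : EReal) * a = ⊤ ↔ a = ⊤ := by
  induction a with
  | bot => rw [EReal.coe_mul_bot_of_pos hc]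
  | coe a =>
    simp only [← EReal.coe_mul]
    simp only [EReal.coe_ne_top, iff_false]
  | top => rw [EReal.coe_mul_top_of_pos hc]

/-- distributivity of positive real scalar over EReal sums avoiding ⊥ -/
lemma distrib_pos {c : ℝ} (hc : 0 < c) {a b : EReal} (ha : a ≠ ⊥) (hb : b ≠ ⊥) :
    (c : EReal) * (a + b) = (c : EReal) * a + (c : EReal) * b := by
  induction a with
  | bot => exact absurd rfl ha
  | coe a =>
    induction b with
    | bot => exact absurd rfl hb
    | coe b => norm_cast; ring
    | top =>
      rw [EReal.add_top_of_ne_bot (EReal.coe_ne_bot _), EReal.mul_top_of_pos (by exact_mod_cast hc),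
        ← EReal.coe_mul, EReal.add_top_of_ne_bot (EReal.coe_ne_bot _)]
  | top =>
    induction b with
    | bot => exact absurd rfl hb
    | coe b =>
      rw [EReal.top_add_of_ne_bot (EReal.coe_ne_bot _), EReal.mul_top_of_pos (by exact_mod_cast hc),
        ← EReal.coe_mul, EReal.top_add_of_ne_bot (EReal.coe_ne_bot _)]
    | top =>
      rw [EReal.top_add_top, EReal.mul_top_of_pos (by exact_mod_cast hc), EReal.top_add_top]

lemma distrib_nonneg {c : ℝ} (hc : 0 ≤ c) {a b : EReal} (ha : a ≠ ⊥) (hb : b ≠ ⊥) :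
    (c : EReal) * (a + b) = (c : EReal) * a + (c : EReal) * b := by
  rcases eq_or_lt_of_le hc with rfl | hc
  · simp
  · exact distrib_pos hc ha hb

lemma coe_mul_coe_mul (a b : ℝ) (x : EReal) :
    (a : EReal) * ((b : EReal) * x) = ((a * b : ℝ) : EReal) * x := by
  rw [← mul_assoc]; norm_cast

lemma sub_le_iff_real {a c : EReal} {r : ℝ} : a - (r : EReal) ≤ c ↔ a ≤ c + r :=
  EReal.sub_le_iff_le_add (Or.inl (EReal.coe_ne_bot _)) (Or.inl (EReal.coe_ne_top _))

lemma lt_sub_iff_real {a c : EReal} {r : ℝ} : c < a - (r : EReal) ↔ c + r < a := by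
  rw [← not_le, ← not_le, sub_le_iff_real]

lemma sub_ne_bot_real {a : EReal} (ha : a ≠ ⊥) (r : ℝ) : a - (r : EReal) ≠ ⊥ := by
  rw [sub_eq_add_neg, ← EReal.coe_neg]
  simp [EReal.add_eq_bot_iff, ha]

lemma exists_real_lt {a : EReal} (ha : a ≠ ⊥) : ∃ r : ℝ, (r : EReal) < a := by
  induction a with
  | bot => exact absurd rfl ha
  | coe a => exact ⟨a - 1, by exact_mod_cast sub_one_lt a⟩
  | top => exact ⟨0, by simp⟩

section RecBasics

variable {G : Type*} [AddCommGroup G] {f : G → EReal}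

lemma recFn_le_iff {y : G} {c : EReal} :
    recFn f y ≤ c ↔ ∀ x : G, f x ≠ ⊤ → f (x + y) - f x ≤ c := by
  rw [recFn, iSup_le_iff]
  exact ⟨fun h x hx => h ⟨x, hx⟩, fun h x => h x x.2⟩

lemma le_recFn {y : G} {x : G} (hx : f x ≠ ⊤) : f (x + y) - f x ≤ recFn f y :=
  le_iSup (fun x : {x : G // f x ≠ ⊤} => f ((x : G) + y) - f (x : G)) ⟨x, hx⟩

lemma lt_recFn_iff {y : G} {c : EReal} :
    c < recFn f y ↔ ∃ x : G, f x ≠ ⊤ ∧ c < f (x + y) - f x := by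
  rw [recFn, lt_iSup_iff]
  exact ⟨fun ⟨x, hx⟩ => ⟨x, x.2, hx⟩, fun ⟨x, h1, h2⟩ => ⟨⟨x, h1⟩, h2⟩⟩

lemma recFn_ne_bot (hbot : ∀ x, f x ≠ ⊥) {x₀ : G} (hx₀ : f x₀ ≠ ⊤) (y : G) :
    recFn f y ≠ ⊥ := by
  intro h
  have h1 : f (x₀ + y) - f x₀ ≤ ⊥ := h ▸ le_recFn hx₀
  rw [le_bot_iff] at h1
  obtain ⟨k, hk⟩ : ∃ k : ℝ, f x₀ = (k : EReal) :=
    ⟨(f x₀).toReal, (EReal.coe_toReal hx₀ (hbot x₀)).symm⟩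
  rw [hk] at h1
  exact sub_ne_bot_real (hbot (x₀ + y)) k h1

/-- from a step bound everywhere, recFn is bounded -/
lemma recFn_le_of_step {y : G} {r : ℝ} (hbot : ∀ x, f x ≠ ⊥)
    (h : ∀ x, f x ≠ ⊤ → f (x + y) ≤ f x + (r : EReal)) : recFn f y ≤ (r : EReal) := by
  rw [recFn_le_iff]
  intro x hx
  obtain ⟨k, hk⟩ : ∃ k : ℝ, f x = (k : EReal) :=
    ⟨(f x).toReal, (EReal.coe_toReal hx (hbot x)).symm⟩
  rw [hk, sub_le_iff_real, add_comm (r : EReal) (k : EReal), ← hk]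
  exact h x hx

/-- converse: recFn bound gives step bound -/
lemma step_of_recFn_le {y : G} {r : ℝ} (hbot : ∀ x, f x ≠ ⊥)
    (h : recFn f y ≤ (r : EReal)) : ∀ x, f x ≠ ⊤ → f (x + y) ≤ f x + (r : EReal) := by
  intro x hx
  obtain ⟨k, hk⟩ : ∃ k : ℝ, f x = (k : EReal) :=
    ⟨(f x).toReal, (EReal.coe_toReal hx (hbot x)).symm⟩
  have := (le_recFn (f := f) (y := y) hx).trans h
  rw [hk, sub_le_iff_real] at this
  rw [hk, add_comm (k : EReal) (r : EReal)]
  exact this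

end RecBasics

section ConvexHelpers

variable {G : Type*} [AddCommGroup G] [Module ℝ G] {f : G → EReal}

lemma convex_le_real (hconv : ConvexE G f) {u v : G} {a b p q : ℝ}
    (ha : 0 ≤ a) (hb : 0 ≤ b) (hab : a + b = 1)
    (hu : f u ≤ (p : EReal)) (hv : f v ≤ (q : EReal)) :
    f (a • u + b • v) ≤ ((a * p + b * q : ℝ) : EReal) := by
  refine (hconv u v a b ha hb hab).trans ?_
  push_cast
  exact add_le_add (mul_le_mul_of_nonneg_left hu (by exact_mod_cast ha))
    (mul_le_mul_of_nonneg_left hv (by exact_mod_cast hb))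

lemma chain_bound {y : G} {c : ℝ} (hbot : ∀ x, f x ≠ ⊥)
    (hstep : ∀ z, f z ≠ ⊤ → f (z + y) ≤ f z + (c : EReal)) {x : G} (hx : f x ≠ ⊤) :
    ∀ n : ℕ, f (x + (n : ℝ) • y) ≤ f x + (((n : ℝ) * c : ℝ) : EReal) := by
  obtain ⟨k, hk⟩ : ∃ k : ℝ, f x = (k : EReal) :=
    ⟨(f x).toReal, (EReal.coe_toReal hx (hbot x)).symm⟩
  intro n
  induction n with
  | zero => simp
  | succ n ih =>
    have hne : f (x + (n : ℝ) • y) ≠ ⊤ := by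
      intro h
      rw [h, hk] at ih
      exact (EReal.coe_ne_top _) (top_le_iff.mp ih)
    have h1 : f (x + ((n : ℝ) + 1) • y) ≤ f (x + (n : ℝ) • y) + (c : EReal) := by
      have : x + ((n : ℝ) + 1) • y = (x + (n : ℝ) • y) + y := by
        rw [add_smul, one_smul]; abel
      rw [this]
      exact hstep _ hne
    push_cast
    refine h1.trans ?_
    calc f (x + (n : ℝ) • y) + (c : EReal)
        ≤ (f x + (((n : ℝ) * c : ℝ) : EReal)) + (c : EReal) :=
          add_le_add_left ih _
      _ = f x + ((((n : ℝ) + 1) * c : ℝ) : EReal) := by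
          rw [add_assoc]; congr 1; norm_cast; push_cast; ring

lemma ray_bound (hconv : ConvexE G f) (hbot : ∀ x, f x ≠ ⊥) {y : G} {c : ℝ}
    (hstep : ∀ z, f z ≠ ⊤ → f (z + y) ≤ f z + (c : EReal)) (x : G) {t : ℝ} (ht : 0 ≤ t) :
    f (x + t • y) ≤ f x + ((t * c : ℝ) : EReal) := by
  rcases eq_or_ne (f x) ⊤ with hx | hx
  · rw [hx, EReal.top_add_of_ne_bot (EReal.coe_ne_bot _)]; exact le_top
  rcases eq_or_lt_of_le ht with rfl | ht
  · simp
  obtain ⟨k, hk⟩ : ∃ k : ℝ, f x = (k : EReal) :=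
    ⟨(f x).toReal, (EReal.coe_toReal hx (hbot x)).symm⟩
  obtain ⟨n, hn1, hn2⟩ : ∃ n : ℕ, t ≤ (n : ℝ) ∧ 1 ≤ (n : ℝ) := by
    obtain ⟨n, hn⟩ := exists_nat_ge (max t 1)
    exact ⟨n, (le_max_left _ _).trans hn, (le_max_right _ _).trans hn⟩
  have hnpos : (0 : ℝ) < n := lt_of_lt_of_le one_pos hn2
  have hb0 : 0 ≤ t / n := div_nonneg ht.le (le_of_lt hnpos)
  have hb1 : t / n ≤ 1 := by rw [div_le_one hnpos]; exact hn1
  have hpt : (1 - t / n) • x + (t / n) • (x + (n : ℝ) • y) = x + t • y := by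
    rw [smul_add, smul_smul, div_mul_cancel₀ _ (ne_of_gt hnpos)]
    rw [← add_assoc, ← add_smul]
    norm_num
  have hv : f (x + (n : ℝ) • y) ≤ ((k + (n : ℝ) * c : ℝ) : EReal) := by
    have := chain_bound hbot hstep hx n
    rw [hk] at this
    push_cast at this ⊢
    exact this
  have := convex_le_real hconv (by linarith : (0:ℝ) ≤ 1 - t / n) hb0 (by ring)
    (le_of_eq hk) hv
  rw [hpt] at this
  refine this.trans ?_
  rw [hk, ← EReal.coe_add, EReal.coe_le_coe_iff]
  have : (t / n) * ((n:ℝ) * c) = t * c := by field_simp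
  nlinarith [this]

lemma le_add_mul_recFn (hconv : ConvexE G f) (hbot : ∀ x, f x ≠ ⊥)
    (hne : ∃ x₀, f x₀ ≠ ⊤) (x : G) (y : G) {t : ℝ} (ht : 0 < t) :
    f (x + t • y) ≤ f x + (t : EReal) * recFn f y := by
  obtain ⟨x₀, hx₀⟩ := hne
  rcases eq_or_ne (recFn f y) ⊤ with hT | hT
  · rw [hT, EReal.mul_top_of_pos (by exact_mod_cast ht), EReal.add_top_of_ne_bot (hbot x)]
    exact le_top
  have hB := recFn_ne_bot hbot hx₀ y
  have hrec : recFn f y = (((recFn f y).toReal : ℝ) : EReal) := (EReal.coe_toReal hT hB).symm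
  set r := (recFn f y).toReal
  have hstep := step_of_recFn_le hbot (le_of_eq hrec)
  have := ray_bound hconv hbot hstep x ht.le
  rw [hrec, ← EReal.coe_mul]
  exact this


end ConvexHelpers

section TopHelpers
set_option linter.unusedSectionVars false

variable {G : Type*} [NormedAddCommGroup G] [InnerProductSpace ℝ G]

/-- sequential bound through lower semicontinuity -/
lemma le_of_lsc_seq {h : G → EReal} (hl : LowerSemicontinuous h) {z : ℕ → G} {y : G}
    (hz : Tendsto z atTop (𝓝 y)) {C : EReal} (hb : ∀ᶠ n in atTop, h (z n) ≤ C) :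
    h y ≤ C := by
  by_contra hc
  push_neg at hc
  have := (hz.eventually (hl y C hc)).and hb
  obtain ⟨n, h1, h2⟩ := this.exists
  exact absurd (h1.trans_le h2) (lt_irrefl C)

/-- eventual strict lower bound through lsc along a converging sequence -/
lemma ev_lt_of_lsc_seq {h : G → EReal} (hl : LowerSemicontinuous h) {z : ℕ → G} {y : G}
    (hz : Tendsto z atTop (𝓝 y)) {c : EReal} (hc : c < h y) :
    ∀ᶠ n in atTop, c < h (z n) :=
  hz.eventually (hl y c hc)

lemma tendsto_aux (x₀ y : G) :
    Tendsto (fun n : ℕ => (((n : ℝ) + 1)⁻¹) • x₀ + y) atTop (𝓝 y) := by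
  have h1 : Tendsto (fun n : ℕ => ((n : ℝ) + 1)⁻¹) atTop (𝓝 0) := by
    have := tendsto_one_div_add_atTop_nhds_zero_nat (𝕜 := ℝ)
    exact this.congr (fun n => one_div _)
  have h2 : Tendsto (fun n : ℕ => (((n : ℝ) + 1)⁻¹) • x₀) atTop (𝓝 0) := by
    simpa using h1.smul_const x₀
  simpa using h2.add tendsto_const_nhds

/-- lower semicontinuity of sums of EReal functions that avoid ⊥ -/
lemma lsc_add {h g : G → EReal} (hh : LowerSemicontinuous h) (hg : LowerSemicontinuous g)
    (hhb : ∀ x, h x ≠ ⊥) (hgb : ∀ x, g x ≠ ⊥) :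
    LowerSemicontinuous (fun x => h x + g x) := by
  intro x c hc
  rcases eq_or_ne c ⊥ with rfl | hcb
  · obtain ⟨u, hu⟩ : ∃ r : ℝ, (r : EReal) < h x := exists_real_lt (hhb x)
    obtain ⟨v, hv⟩ : ∃ r : ℝ, (r : EReal) < g x := exists_real_lt (hgb x)
    filter_upwards [hh x u hu, hg x v hv] with z h1 h2
    calc (⊥ : EReal) < ((u + v : ℝ) : EReal) := EReal.bot_lt_coe _
      _ < h z + g z := by rw [EReal.coe_add]; exact EReal.add_lt_add h1 h2
  have hct : c ≠ ⊤ := fun h => absurd (h ▸ hc) not_top_lt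
  obtain ⟨cr, rfl⟩ : ∃ cr : ℝ, c = (cr : EReal) :=
    ⟨c.toReal, (EReal.coe_toReal hct hcb).symm⟩
  -- find u v reals with cr ≤ u + v, u < h x, v < g x
  obtain ⟨u, v, huv, hu, hv⟩ : ∃ u v : ℝ, cr ≤ u + v ∧ (u : EReal) < h x ∧ (v : EReal) < g x := by
    rcases eq_or_ne (h x) ⊤ with hxt | hxt
    · obtain ⟨v, hv⟩ : ∃ r : ℝ, (r : EReal) < g x := exists_real_lt (hgb x)
      exact ⟨cr - v, v, by ring_nf; exact le_refl _, by rw [hxt]; exact EReal.coe_lt_top _, hv⟩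
    · obtain ⟨p, hp⟩ : ∃ p : ℝ, h x = (p : EReal) :=
        ⟨(h x).toReal, (EReal.coe_toReal hxt (hhb x)).symm⟩
      have hgx : ((cr - p : ℝ) : EReal) < g x := by
        by_contra hle
        push_neg at hle
        have : h x + g x ≤ ((p + (cr - p) : ℝ) : EReal) := by
          rw [EReal.coe_add, hp]
          exact add_le_add_right hle _
        simp only [add_sub_cancel] at this
        exact absurd (hc.trans_le this) (lt_irrefl _)
      obtain ⟨v, hv1, hv2⟩ := EReal.exists_between_coe_real hgx
      refine ⟨cr - v, v, by ring_nf; exact le_refl _, ?_, hv2⟩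
      rw [hp]
      exact_mod_cast by exact_mod_cast (by linarith [show cr - p < v from by exact_mod_cast hv1] : cr - v < p)
  filter_upwards [hh x u hu, hg x v hv] with z h1 h2
  calc ((cr : ℝ) : EReal) ≤ ((u + v : ℝ) : EReal) := by exact_mod_cast huv
    _ < h z + g z := by rw [EReal.coe_add]; exact EReal.add_lt_add h1 h2


end TopHelpers

section RayLemma
set_option linter.unusedSectionVars false
variable {G : Type*} [NormedAddCommGroup G] [InnerProductSpace ℝ G] {f : G → EReal}

lemma recFn_le_of_ray (hbot : ∀ x, f x ≠ ⊥) (hlsc : LowerSemicontinuous f)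
    (hconv : ConvexE G f) {x₀ y : G} (hx₀ : f x₀ ≠ ⊤) {c : ℝ}
    (hray : ∀ n : ℕ, f (x₀ + (n : ℝ) • y) ≤ f x₀ + (((n : ℝ) * c : ℝ) : EReal)) :
    recFn f y ≤ (c : EReal) := by
  apply recFn_le_of_step hbot
  intro x hx
  obtain ⟨p, hp⟩ : ∃ p : ℝ, f x = (p : EReal) :=
    ⟨(f x).toReal, (EReal.coe_toReal hx (hbot x)).symm⟩
  obtain ⟨k₀, hk₀⟩ : ∃ k₀ : ℝ, f x₀ = (k₀ : EReal) :=
    ⟨(f x₀).toReal, (EReal.coe_toReal hx₀ (hbot x₀)).symm⟩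
  by_contra hgt
  push_neg at hgt
  rw [hp] at hgt
  have hgt' : ((p + c : ℝ) : EReal) < f (x + y) := by
    rw [EReal.coe_add]; exact hgt
  obtain ⟨c₁, hc₁l, hc₁r⟩ := EReal.exists_between_coe_real hgt'
  set z : ℕ → G := fun n => (((n : ℝ) + 1)⁻¹) • (x₀ - x) + (x + y) with hz
  have htend : Tendsto z atTop (𝓝 (x + y)) := tendsto_aux (x₀ - x) (x + y)
  -- convexity bound on f (z n)
  have hbound : ∀ n : ℕ, f (z n) ≤
      (((1 - ((n:ℝ)+1)⁻¹) * p + ((n:ℝ)+1)⁻¹ * (k₀ + ((n:ℝ)+1) * c) : ℝ) : EReal) := by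
    intro n
    have hb0 : (0:ℝ) ≤ ((n:ℝ)+1)⁻¹ := by positivity
    have hb1 : ((n:ℝ)+1)⁻¹ ≤ 1 := by
      rw [inv_le_one_iff₀]; right; linarith [Nat.cast_nonneg (α := ℝ) n]
    have hv : f (x₀ + ((n:ℝ)+1) • y) ≤ ((k₀ + ((n:ℝ)+1) * c : ℝ) : EReal) := by
      have := hray (n+1)
      rw [hk₀] at this
      push_cast at this ⊢
      exact this
    have hpt : (1 - ((n:ℝ)+1)⁻¹) • x + (((n:ℝ)+1)⁻¹) • (x₀ + ((n:ℝ)+1) • y) = z n := by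
      have hne : ((n:ℝ)+1) ≠ 0 := by positivity
      rw [hz]
      simp only [smul_add, smul_smul, inv_mul_cancel₀ hne, one_smul, sub_smul, one_smul,
        smul_sub]
      abel
    have := convex_le_real hconv (by linarith : (0:ℝ) ≤ 1 - ((n:ℝ)+1)⁻¹) hb0 (by ring)
      (le_of_eq hp) hv
    rwa [hpt] at this
  have hBtend : Tendsto (fun n : ℕ =>
      (1 - ((n:ℝ)+1)⁻¹) * p + ((n:ℝ)+1)⁻¹ * (k₀ + ((n:ℝ)+1) * c)) atTop (𝓝 (p + c)) := by
    have h1 : Tendsto (fun n : ℕ => ((n : ℝ) + 1)⁻¹) atTop (𝓝 0) := by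
      exact (tendsto_one_div_add_atTop_nhds_zero_nat (𝕜 := ℝ)).congr (fun n => one_div _)
    have heq : ∀ n : ℕ, (1 - ((n:ℝ)+1)⁻¹) * p + ((n:ℝ)+1)⁻¹ * (k₀ + ((n:ℝ)+1) * c)
        = (1 - ((n:ℝ)+1)⁻¹) * p + ((n:ℝ)+1)⁻¹ * k₀ + c := by
      intro n
      have hne : ((n:ℝ)+1) ≠ 0 := by positivity
      field_simp
      ring
    simp only [heq]
    have : Tendsto (fun n : ℕ => (1 - ((n:ℝ)+1)⁻¹) * p + ((n:ℝ)+1)⁻¹ * k₀ + c) atTop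
        (𝓝 ((1 - 0) * p + 0 * k₀ + c)) := by
      exact (((tendsto_const_nhds.sub h1).mul tendsto_const_nhds).add
        (h1.mul tendsto_const_nhds)).add tendsto_const_nhds
    simpa using this
  have hplt : p + c < c₁ := by exact_mod_cast hc₁l
  have hev1 : ∀ᶠ n : ℕ in atTop,
      (1 - ((n:ℝ)+1)⁻¹) * p + ((n:ℝ)+1)⁻¹ * (k₀ + ((n:ℝ)+1) * c) < c₁ :=
    hBtend.eventually (gt_mem_nhds hplt)
  have hev2 : ∀ᶠ n : ℕ in atTop, (c₁ : EReal) < f (z n) :=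
    ev_lt_of_lsc_seq hlsc htend hc₁r
  obtain ⟨n, h1, h2⟩ := (hev1.and hev2).exists
  have := h2.trans_le (hbound n)
  rw [EReal.coe_lt_coe_iff] at this
  linarith

end RayLemma

section RecSum
set_option linter.unusedSectionVars false
set_option maxHeartbeats 1000000
variable {G : Type*} [NormedAddCommGroup G] [InnerProductSpace ℝ G] {φ ψ : G → EReal}

lemma add3_eq_top_iff {a b : EReal} (d : ℝ) (ha : a ≠ ⊥) (hb : b ≠ ⊥) :
    a + b + (d : EReal) = ⊤ ↔ a = ⊤ ∨ b = ⊤ := by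
  induction a with
  | bot => exact absurd rfl ha
  | coe a =>
    induction b with
    | bot => exact absurd rfl hb
    | coe b =>
      constructor
      · intro h; exfalso; rw [← EReal.coe_add, ← EReal.coe_add] at h
        exact (EReal.coe_ne_top _) h
      · rintro (h | h) <;> exact absurd h (EReal.coe_ne_top _)
    | top =>
      rw [EReal.add_top_of_ne_bot (EReal.coe_ne_bot _),
        EReal.top_add_of_ne_bot (EReal.coe_ne_bot _)]
      simp
  | top =>
    rw [EReal.top_add_of_ne_bot hb, EReal.top_add_of_ne_bot (EReal.coe_ne_bot _)]
    simp

omit [NormedAddCommGroup G] [InnerProductSpace ℝ G] in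
lemma psi_subadd [AddCommGroup G] [Module ℝ G] (hψc : ConvexE G ψ) (hψb : ∀ x, ψ x ≠ ⊥)
    (hpos : ∀ lam : ℝ, 0 < lam → ∀ y : G, ψ (lam • y) = (lam : EReal) * ψ y) (x y : G) :
    ψ (x + y) ≤ ψ x + ψ y := by
  have hpt : (2:ℝ) • ((1/2 : ℝ) • x + (1/2 : ℝ) • y) = x + y := by
    rw [smul_add, smul_smul, smul_smul]; norm_num
  have h1 : ψ (x + y) = ((2:ℝ) : EReal) * ψ ((1/2 : ℝ) • x + (1/2 : ℝ) • y) := by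
    rw [← hpt, hpos 2 two_pos]
  have h2 := hψc x y (1/2) (1/2) (by norm_num) (by norm_num) (by norm_num)
  have h3 : ((2:ℝ) : EReal) * ψ ((1/2 : ℝ) • x + (1/2 : ℝ) • y)
      ≤ ((2:ℝ) : EReal) * (((1/2 : ℝ) : EReal) * ψ x + ((1/2 : ℝ) : EReal) * ψ y) :=
    mul_le_mul_of_nonneg_left h2 (by norm_num)
  have h4 : ((2:ℝ) : EReal) * (((1/2 : ℝ) : EReal) * ψ x + ((1/2 : ℝ) : EReal) * ψ y)
      = ψ x + ψ y := by
    have hx' : ((1/2 : ℝ) : EReal) * ψ x ≠ ⊥ := mul_ne_bot_of_pos (by norm_num) (hψb x)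
    have hy' : ((1/2 : ℝ) : EReal) * ψ y ≠ ⊥ := mul_ne_bot_of_pos (by norm_num) (hψb y)
    rw [distrib_pos two_pos hx' hy', coe_mul_coe_mul, coe_mul_coe_mul]
    norm_num
  rw [h1]
  exact h3.trans (le_of_eq h4)

lemma rec_sum (hφb : ∀ x, φ x ≠ ⊥) (hφl : LowerSemicontinuous φ) (hφc : ConvexE G φ)
    (hψb : ∀ x, ψ x ≠ ⊥) (hψl : LowerSemicontinuous ψ) (hψc : ConvexE G ψ)
    (hpos : ∀ lam : ℝ, 0 < lam → ∀ y : G, ψ (lam • y) = (lam : EReal) * ψ y)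
    {x₀ : G} (hx₀φ : φ x₀ ≠ ⊤) (hx₀ψ : ψ x₀ ≠ ⊤) (δ : ℝ) (y : G) :
    recFn (fun x => φ x + ψ x + (δ : EReal)) y = recFn φ y + ψ y := by
  set f : G → EReal := fun x => φ x + ψ x + (δ : EReal) with hf
  have hfb : ∀ x, f x ≠ ⊥ := by
    intro x h
    rw [hf] at h
    simp only at h
    rcases EReal.add_eq_bot_iff.mp h with h' | h'
    · rcases EReal.add_eq_bot_iff.mp h' with h'' | h''
      · exact hφb x h''
      · exact hψb x h''
    · exact EReal.coe_ne_bot _ h'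
  have hftop : ∀ x, f x ≠ ⊤ → φ x ≠ ⊤ ∧ ψ x ≠ ⊤ := by
    intro x hx
    have := (add3_eq_top_iff δ (hφb x) (hψb x)).not.mp hx
    push_neg at this
    exact this
  have hfx₀ : f x₀ ≠ ⊤ := by
    rw [hf]
    simp only
    rw [ne_eq, add3_eq_top_iff δ (hφb x₀) (hψb x₀)]
    push_neg
    exact ⟨hx₀φ, hx₀ψ⟩
  apply le_antisymm
  · -- rec f ≤ rec φ + ψ y
    rw [recFn_le_iff]
    intro x hx
    obtain ⟨hφx, hψx⟩ := hftop x hx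
    obtain ⟨px, hpx⟩ : ∃ p : ℝ, φ x = (p : EReal) :=
      ⟨(φ x).toReal, (EReal.coe_toReal hφx (hφb x)).symm⟩
    obtain ⟨qx, hqx⟩ : ∃ q : ℝ, ψ x = (q : EReal) :=
      ⟨(ψ x).toReal, (EReal.coe_toReal hψx (hψb x)).symm⟩
    have hfx : f x = ((px + qx + δ : ℝ) : EReal) := by
      rw [hf]; simp only; rw [hpx, hqx]; norm_cast
    rw [hfx, sub_le_iff_real]
    have h1 : φ (x + y) ≤ recFn φ y + (px : EReal) := by
      have := le_recFn (f := φ) (y := y) hφx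
      rw [hpx, sub_le_iff_real] at this
      exact this
    have h2 : ψ (x + y) ≤ (qx : EReal) + ψ y := by
      have := psi_subadd hψc hψb hpos x y
      rw [hqx] at this
      exact this
    have h3 : f (x + y) ≤ (recFn φ y + (px : EReal)) + ((qx : EReal) + ψ y) + (δ : EReal) := by
      rw [hf]
      exact add_le_add_left (add_le_add h1 h2) _
    refine h3.trans (le_of_eq ?_)
    push_cast
    abel
  · -- rec φ + ψ y ≤ rec f
    rcases eq_or_ne (recFn f y) ⊤ with hT | hT
    · rw [hT]; exact le_top
    have hRb : recFn f y ≠ ⊥ := recFn_ne_bot hfb hfx₀ y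
    obtain ⟨r, hr⟩ : ∃ r : ℝ, recFn f y = (r : EReal) :=
      ⟨(recFn f y).toReal, (EReal.coe_toReal hT hRb).symm⟩
    have hstep := step_of_recFn_le hfb (le_of_eq hr)
    obtain ⟨k, hk⟩ : ∃ k : ℝ, f x₀ = (k : EReal) :=
      ⟨(f x₀).toReal, (EReal.coe_toReal hfx₀ (hfb x₀)).symm⟩
    set F : ℕ → G := fun n => x₀ + (n : ℝ) • y with hF
    have hFb : ∀ n : ℕ, f (F n) ≤ ((k + (n:ℝ) * r : ℝ) : EReal) := by
      intro n
      have := chain_bound hfb hstep hfx₀ n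
      rw [hk] at this
      rw [hF]
      refine this.trans (le_of_eq ?_)
      norm_cast
    have hFt : ∀ n : ℕ, f (F n) ≠ ⊤ := by
      intro n h
      have := hFb n
      rw [h] at this
      exact (EReal.coe_ne_top _) (top_le_iff.mp this)
    have hφF : ∀ n : ℕ, φ (F n) ≠ ⊤ := fun n => (hftop _ (hFt n)).1
    have hψF : ∀ n : ℕ, ψ (F n) ≠ ⊤ := fun n => (hftop _ (hFt n)).2
    set P : ℕ → ℝ := fun n => (φ (F n)).toReal with hPdef
    set Q : ℕ → ℝ := fun n => (ψ (F n)).toReal with hQdef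
    have hP : ∀ n, φ (F n) = ((P n : ℝ) : EReal) := fun n =>
      (EReal.coe_toReal (hφF n) (hφb _)).symm
    have hQ : ∀ n, ψ (F n) = ((Q n : ℝ) : EReal) := fun n =>
      (EReal.coe_toReal (hψF n) (hψb _)).symm
    have hreal : ∀ n : ℕ, P n + Q n + δ ≤ k + (n:ℝ) * r := by
      intro n
      have h1 := hFb n
      have h2 : f (F n) = ((P n + Q n + δ : ℝ) : EReal) := by
        rw [hf]; simp only; rw [hP n, hQ n]; norm_cast
      rw [h2] at h1
      exact_mod_cast h1
    have hF0 : F 0 = x₀ := by rw [hF]; simp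
    -- chord inequality
    have chordP : ∀ m n : ℕ, (m:ℝ) ≤ (n:ℝ) + 1 →
        P m ≤ (1 - (m:ℝ)/((n:ℝ)+1)) * P 0 + ((m:ℝ)/((n:ℝ)+1)) * P (n+1) := by
      intro m n hmn
      have hd : ((n:ℝ)+1) ≠ 0 := by positivity
      have hb0 : (0:ℝ) ≤ (m:ℝ)/((n:ℝ)+1) := by positivity
      have hb1 : (m:ℝ)/((n:ℝ)+1) ≤ 1 := by
        rw [div_le_one (by positivity)]; exact hmn
      have hpt : (1 - (m:ℝ)/((n:ℝ)+1)) • x₀ + ((m:ℝ)/((n:ℝ)+1)) • F (n+1) = F m := by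
        rw [hF]
        simp only [smul_add, smul_smul]
        push_cast
        rw [div_mul_cancel₀ _ hd, sub_smul, one_smul]
        abel
      have := convex_le_real hφc (by linarith : (0:ℝ) ≤ 1 - (m:ℝ)/((n:ℝ)+1)) hb0 (by ring)
        (le_of_eq (hF0 ▸ hP 0)) (le_of_eq (hP (n+1)))
      rw [hpt, hP m] at this
      exact_mod_cast this
    -- homogeneity sequence
    set w : ℕ → G := fun n => (((n:ℝ)+1)⁻¹) • x₀ + y with hwdef
    have hw : Tendsto w atTop (𝓝 y) := tendsto_aux x₀ y
    have hsmul : ∀ n : ℕ, ((n:ℝ)+1) • w n = F (n+1) := by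
      intro n
      have hd : ((n:ℝ)+1) ≠ 0 := by positivity
      rw [hwdef, hF]
      simp only [smul_add, smul_smul, mul_inv_cancel₀ hd, one_smul]
      push_cast
      ring_nf
    have hψw : ∀ n : ℕ, ψ (F (n+1)) = (((n:ℝ)+1 : ℝ) : EReal) * ψ (w n) := by
      intro n
      rw [← hsmul n, hpos ((n:ℝ)+1) (by positivity) (w n)]
    have hψwt : ∀ n : ℕ, ψ (w n) ≠ ⊤ := by
      intro n h
      apply hψF (n+1)
      rw [hψw n, h, EReal.mul_top_of_pos]
      exact_mod_cast (by positivity : (0:ℝ) < (n:ℝ)+1)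
    set S : ℕ → ℝ := fun n => (ψ (w n)).toReal with hSdef
    have hS : ∀ n, ψ (w n) = ((S n : ℝ) : EReal) := fun n =>
      (EReal.coe_toReal (hψwt n) (hψb _)).symm
    have hQS : ∀ n : ℕ, Q (n+1) = ((n:ℝ)+1) * S n := by
      intro n
      have : ((Q (n+1) : ℝ) : EReal) = ((((n:ℝ)+1) * S n : ℝ) : EReal) := by
        rw [← hQ (n+1), hψw n, hS n]
        norm_cast
      exact_mod_cast this
    -- uniform upper bound for S
    set M : ℝ := |k - δ| + |r| + |P 1| + |P 0| with hM
    have hSM : ∀ n : ℕ, S n ≤ M := by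
      intro n
      have hd : (0:ℝ) < (n:ℝ)+1 := by positivity
      have h1 : P (n+1) + ((n:ℝ)+1) * S n + δ ≤ k + ((n:ℝ)+1) * r := by
        have := hreal (n+1)
        rw [hQS n] at this
        push_cast at this
        linarith
      have h2 := chordP 1 n (by push_cast; linarith [Nat.cast_nonneg (α := ℝ) n])
      have h3 : ((n:ℝ)+1) * P 1 ≤ (n:ℝ) * P 0 + P (n+1) := by
        have := mul_le_mul_of_nonneg_left h2 hd.le
        have he : ((n:ℝ)+1) * ((1 - (1:ℕ)/((n:ℝ)+1)) * P 0 + ((1:ℕ)/((n:ℝ)+1)) * P (n+1))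
            = (n:ℝ) * P 0 + P (n+1) := by
          push_cast
          field_simp
          try ring
        rw [he] at this
        exact this
      -- (n+1) * S n ≤ k - δ + (n+1) r - (n+1) P 1 + n P 0
      have h4 : ((n:ℝ)+1) * S n ≤ (k - δ) + ((n:ℝ)+1) * r - ((n:ℝ)+1) * P 1 + (n:ℝ) * P 0 := by
        linarith
      have habs1 : k - δ ≤ |k - δ| := le_abs_self _
      have habs2 : ((n:ℝ)+1) * r ≤ ((n:ℝ)+1) * |r| :=
        mul_le_mul_of_nonneg_left (le_abs_self r) hd.le
      have habs3 : -(((n:ℝ)+1) * P 1) ≤ ((n:ℝ)+1) * |P 1| := by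
        rw [← mul_neg]
        exact mul_le_mul_of_nonneg_left (neg_le_abs _) hd.le
      have habs4 : (n:ℝ) * P 0 ≤ (n:ℝ) * |P 0| :=
        mul_le_mul_of_nonneg_left (le_abs_self _) (Nat.cast_nonneg n)
      have h5 : ((n:ℝ)+1) * S n ≤ ((n:ℝ)+1) * M := by
        rw [hM]
        have e1 : |k - δ| ≤ ((n:ℝ)+1) * |k - δ| := by
          nlinarith [abs_nonneg (k - δ), Nat.cast_nonneg (α := ℝ) n]
        have e2 : (n:ℝ) * |P 0| ≤ ((n:ℝ)+1) * |P 0| := by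
          nlinarith [abs_nonneg (P 0)]
        nlinarith [abs_nonneg (k - δ), abs_nonneg r, abs_nonneg (P 1), abs_nonneg (P 0),
          Nat.cast_nonneg (α := ℝ) n]
      exact le_of_mul_le_mul_left h5 hd
    have hψyM : ψ y ≤ ((M : ℝ) : EReal) :=
      le_of_lsc_seq hψl hw (Filter.Eventually.of_forall fun n => by
        rw [hS n]; exact_mod_cast hSM n)
    have hψyt : ψ y ≠ ⊤ := fun h => by
      rw [h] at hψyM; exact (EReal.coe_ne_top _) (top_le_iff.mp hψyM)
    obtain ⟨s, hsy⟩ : ∃ s : ℝ, ψ y = (s : EReal) :=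
      ⟨(ψ y).toReal, (EReal.coe_toReal hψyt (hψb y)).symm⟩
    -- main estimate
    have main : ∀ m : ℕ, P m ≤ P 0 + (m:ℝ) * (r - s) := by
      intro m
      rcases Nat.eq_zero_or_pos m with rfl | hm
      · simp
      have hm' : (1:ℝ) ≤ (m:ℝ) := by exact_mod_cast hm
      have hmpos : (0:ℝ) < (m:ℝ) := by linarith
      by_contra hcon
      push_neg at hcon
      set ε : ℝ := P m - (P 0 + (m:ℝ) * (r - s)) with hε
      have hεpos : 0 < ε := by rw [hε]; linarith
      set C : ℝ := |k - δ| + |P 0| + 1 with hC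
      have hCpos : 0 < C := by rw [hC]; positivity
      have hev1 : ∀ᶠ n : ℕ in atTop, ((s - ε/(4*(m:ℝ)) : ℝ) : EReal) < ψ (w n) := by
        apply ev_lt_of_lsc_seq hψl hw
        rw [hsy]
        have hq : (0:ℝ) < ε/(4*(m:ℝ)) := by positivity
        exact_mod_cast (by linarith : s - ε/(4*(m:ℝ)) < s)
      have htendC : Tendsto (fun n : ℕ => (m:ℝ)/((n:ℝ)+1) * C) atTop (𝓝 0) := by
        have h1 : Tendsto (fun n : ℕ => ((n : ℝ) + 1)⁻¹) atTop (𝓝 0) := by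
          exact (tendsto_one_div_add_atTop_nhds_zero_nat (𝕜 := ℝ)).congr (fun n => one_div _)
        have := (h1.const_mul ((m:ℝ) * C))
        simp only [mul_zero] at this
        refine this.congr' (Filter.Eventually.of_forall fun n => by ring)
      have hev2 : ∀ᶠ n : ℕ in atTop, (m:ℝ)/((n:ℝ)+1) * C < ε/4 :=
        htendC.eventually (gt_mem_nhds (by positivity))
      have hev3 : ∀ᶠ n : ℕ in atTop, (m:ℝ) ≤ (n:ℝ) + 1 :=
        (Filter.eventually_ge_atTop m).mono fun n hn => by
          have : (m:ℝ) ≤ (n:ℝ) := by exact_mod_cast hn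
          linarith
      obtain ⟨n, hn⟩ := ((hev1.and hev2).and hev3).exists
      obtain ⟨⟨h1, h2⟩, h3⟩ := hn
      set b : ℝ := (m:ℝ)/((n:ℝ)+1) with hbdef
      have hd : (0:ℝ) < (n:ℝ)+1 := by positivity
      have hb0 : 0 ≤ b := by positivity
      have hbm : b * ((n:ℝ)+1) = (m:ℝ) := div_mul_cancel₀ _ (ne_of_gt hd)
      have hchord := chordP m n h3
      have hSn : s - ε/(4*(m:ℝ)) < S n := by
        have := h1
        rw [hS n] at this
        exact_mod_cast this
      have hup : P (n+1) ≤ k - δ + ((n:ℝ)+1) * r - ((n:ℝ)+1) * S n := by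
        have := hreal (n+1)
        rw [hQS n] at this
        push_cast at this
        linarith
      have e1 : b * P (n+1) ≤ b * (k - δ) + (m:ℝ) * r - (m:ℝ) * S n := by
        calc b * P (n+1) ≤ b * (k - δ + ((n:ℝ)+1) * r - ((n:ℝ)+1) * S n) :=
              mul_le_mul_of_nonneg_left hup hb0
          _ = b * (k - δ) + (b * ((n:ℝ)+1)) * r - (b * ((n:ℝ)+1)) * S n := by ring
          _ = b * (k - δ) + (m:ℝ) * r - (m:ℝ) * S n := by rw [hbm]
      have e2 : b * (k - δ) ≤ b * C := by
        apply mul_le_mul_of_nonneg_left _ hb0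
        rw [hC]
        have := le_abs_self (k - δ)
        have := abs_nonneg (P 0)
        linarith
      have e3 : -(b * P 0) ≤ b * C := by
        rw [← mul_neg]
        apply mul_le_mul_of_nonneg_left _ hb0
        rw [hC]
        have := neg_le_abs (P 0)
        have := abs_nonneg (k - δ)
        linarith
      have e4 : (m:ℝ) * s - ε/4 < (m:ℝ) * S n := by
        have := mul_lt_mul_of_pos_left hSn hmpos
        have he : (m:ℝ) * (s - ε/(4*(m:ℝ))) = (m:ℝ) * s - ε/4 := by
          field_simp
        rw [he] at this
        exact this
      have e5 : (1 - b) * P 0 = P 0 - b * P 0 := by ring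
      have hfinal : P m ≤ P 0 - b * P 0 + b * P (n + 1) := by
        rw [← e5]; exact hchord
      -- combine everything
      have : P m < P 0 + (m:ℝ) * (r - s) + (3/4) * ε := by
        have hbC := h2
        nlinarith [e1, e2, e3, e4, hfinal, hbC]
      rw [hε] at this
      linarith [this]
    have hray : ∀ n : ℕ, φ (x₀ + (n:ℝ) • y) ≤ φ x₀ + (((n:ℝ) * (r - s) : ℝ) : EReal) := by
      intro n
      have h1 : φ (F n) ≤ ((P 0 + (n:ℝ) * (r - s) : ℝ) : EReal) := by
        rw [hP n]; exact_mod_cast main n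
      have h2 : φ x₀ = ((P 0 : ℝ) : EReal) := hF0 ▸ hP 0
      rw [hF] at h1
      simp only at h1
      rw [h2, ← EReal.coe_add]
      exact h1
    have hrecφ : recFn φ y ≤ ((r - s : ℝ) : EReal) :=
      recFn_le_of_ray hφb hφl hφc hx₀φ hray
    calc recFn φ y + ψ y ≤ ((r - s : ℝ) : EReal) + ((s : ℝ) : EReal) := by
          rw [hsy]; exact add_le_add_left hrecφ _
      _ = ((r : ℝ) : EReal) := by norm_cast; ring_nf
      _ = recFn f y := hr.symm

end RecSum

section PerspBasic
set_option linter.unusedSectionVars false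
set_option maxHeartbeats 1000000
variable {G : Type*} [NormedAddCommGroup G] [InnerProductSpace ℝ G] {f : G → EReal}

lemma persp_of_pos {η : ℝ} {y : G} (h : 0 < η) :
    persp f (η, y) = (η : EReal) * f (η⁻¹ • y) := if_pos h

lemma persp_of_zero {y : G} : persp f (0, y) = recFn f y := by
  rw [persp]; norm_num

lemma persp_of_neg {η : ℝ} {y : G} (h : η < 0) : persp f (η, y) = ⊤ := by
  rw [persp]
  simp only
  rw [if_neg (by simpa using not_lt.mpr h.le), if_neg (ne_of_lt h)]

lemma persp_ne_bot (hb : ∀ x, f x ≠ ⊥) (hne : ∃ x, f x ≠ ⊤) (p : ℝ × G) :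
    persp f p ≠ ⊥ := by
  obtain ⟨η, y⟩ := p
  obtain ⟨x₀, hx₀⟩ := hne
  rcases lt_trichotomy η 0 with h | h | h
  · rw [persp_of_neg h]; simp
  · subst h; rw [persp_of_zero]; exact recFn_ne_bot hb hx₀ y
  · rw [persp_of_pos h]; exact mul_ne_bot_of_pos h (hb _)

lemma persp_convex (hb : ∀ x, f x ≠ ⊥) (hne : ∃ x, f x ≠ ⊤) (hconv : ConvexE G f) :
    ConvexE (ℝ × G) (persp f) := by
  obtain ⟨x₀, hx₀⟩ := hne
  rintro ⟨η₁, y₁⟩ ⟨η₂, y₂⟩ a b ha hb' hab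
  have hsum : a • ((η₁, y₁) : ℝ × G) + b • ((η₂, y₂) : ℝ × G)
      = ((a * η₁ + b * η₂ : ℝ), a • y₁ + b • y₂) := by
    simp [Prod.ext_iff, smul_eq_mul]
  rw [hsum]
  rcases eq_or_lt_of_le ha with rfl | hapos
  · have hb1 : b = 1 := by linarith
    subst hb1
    simp only [zero_mul, zero_add, one_mul, zero_smul, one_smul, EReal.coe_zero,
      EReal.coe_one]
    exact le_rfl
  rcases eq_or_lt_of_le hb' with rfl | hbpos
  · have ha1 : a = 1 := by linarith
    subst ha1
    simp only [zero_mul, add_zero, one_mul, zero_smul, one_smul, EReal.coe_zero,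
      EReal.coe_one]
    exact le_rfl
  by_cases h1 : η₁ < 0
  · rw [persp_of_neg h1, EReal.mul_top_of_pos (by exact_mod_cast hapos),
      EReal.top_add_of_ne_bot (mul_ne_bot_of_pos hbpos (persp_ne_bot hb ⟨x₀, hx₀⟩ _))]
    exact le_top
  by_cases h2 : η₂ < 0
  · rw [persp_of_neg h2, EReal.mul_top_of_pos (by exact_mod_cast hbpos),
      EReal.add_top_of_ne_bot (mul_ne_bot_of_pos hapos (persp_ne_bot hb ⟨x₀, hx₀⟩ _))]
    exact le_top
  push_neg at h1 h2
  rcases eq_or_lt_of_le h1 with h1 | h1 <;> rcases eq_or_lt_of_le h2 with h2 | h2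
  · -- η₁ = η₂ = 0
    rw [← h1, ← h2]
    simp only [mul_zero, add_zero]
    rw [persp_of_zero, persp_of_zero, persp_of_zero]
    rw [recFn_le_iff]
    intro x hx
    obtain ⟨k, hk⟩ : ∃ k : ℝ, f x = (k : EReal) :=
      ⟨(f x).toReal, (EReal.coe_toReal hx (hb x)).symm⟩
    have hA : f ((x + a • y₁) + b • y₂) ≤ f (x + a • y₁) + (b : EReal) * recFn f y₂ :=
      le_add_mul_recFn hconv hb ⟨x₀, hx₀⟩ _ _ hbpos
    have hB : f (x + a • y₁) ≤ f x + (a : EReal) * recFn f y₁ :=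
      le_add_mul_recFn hconv hb ⟨x₀, hx₀⟩ _ _ hapos
    have hpt : x + (a • y₁ + b • y₂) = (x + a • y₁) + b • y₂ := by abel
    rw [hpt, hk, sub_le_iff_real]
    calc f ((x + a • y₁) + b • y₂) ≤ f (x + a • y₁) + (b : EReal) * recFn f y₂ := hA
      _ ≤ (f x + (a : EReal) * recFn f y₁) + (b : EReal) * recFn f y₂ :=
          add_le_add_left hB _
      _ = ((a : EReal) * recFn f y₁ + (b : EReal) * recFn f y₂) + (k : EReal) := by
          rw [hk]; abel
  · -- η₁ = 0, η₂ > 0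
    rw [← h1]
    simp only [mul_zero, zero_add]
    have hbη : 0 < b * η₂ := mul_pos hbpos h2
    rw [persp_of_pos hbη, persp_of_zero, persp_of_pos h2]
    set z₂ : G := η₂⁻¹ • y₂ with hz₂
    set t : ℝ := a / (b * η₂) with ht
    have htpos : 0 < t := div_pos hapos hbη
    have hpt : (b * η₂)⁻¹ • (a • y₁ + b • y₂) = z₂ + t • y₁ := by
      rw [hz₂, ht]
      rw [smul_add, smul_smul, smul_smul]
      rw [show (b * η₂)⁻¹ * b = η₂⁻¹ by field_simp]
      rw [show (b * η₂)⁻¹ * a = a / (b * η₂) by field_simp]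
      abel
    rw [hpt]
    have hA : f (z₂ + t • y₁) ≤ f z₂ + (t : EReal) * recFn f y₁ :=
      le_add_mul_recFn hconv hb ⟨x₀, hx₀⟩ _ _ htpos
    have hrb : recFn f y₁ ≠ ⊥ := recFn_ne_bot hb hx₀ y₁
    calc ((b * η₂ : ℝ) : EReal) * f (z₂ + t • y₁)
        ≤ ((b * η₂ : ℝ) : EReal) * (f z₂ + (t : EReal) * recFn f y₁) :=
          mul_le_mul_of_nonneg_left hA (by exact_mod_cast hbη.le)
      _ = ((b * η₂ : ℝ) : EReal) * f z₂ + ((b * η₂ : ℝ) : EReal) * ((t : EReal) * recFn f y₁) :=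
          distrib_pos hbη (hb _) (mul_ne_bot_of_pos htpos hrb)
      _ = (b : EReal) * ((η₂ : EReal) * f z₂) + (a : EReal) * recFn f y₁ := by
          rw [← coe_mul_coe_mul b η₂ (f z₂), coe_mul_coe_mul (b*η₂) t (recFn f y₁),
            show b * η₂ * t = a by rw [ht]; field_simp]
      _ = (a : EReal) * recFn f y₁ + (b : EReal) * ((η₂ : EReal) * f z₂) := add_comm _ _
  · -- η₁ > 0, η₂ = 0
    rw [← h2]
    simp only [mul_zero, add_zero]
    have haη : 0 < a * η₁ := mul_pos hapos h1
    rw [persp_of_pos haη, persp_of_zero, persp_of_pos h1]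
    set z₁ : G := η₁⁻¹ • y₁ with hz₁
    set t : ℝ := b / (a * η₁) with ht
    have htpos : 0 < t := div_pos hbpos haη
    have hpt : (a * η₁)⁻¹ • (a • y₁ + b • y₂) = z₁ + t • y₂ := by
      rw [hz₁, ht]
      rw [smul_add, smul_smul, smul_smul]
      rw [show (a * η₁)⁻¹ * a = η₁⁻¹ by field_simp]
      rw [show (a * η₁)⁻¹ * b = b / (a * η₁) by field_simp]
    rw [hpt]
    have hA : f (z₁ + t • y₂) ≤ f z₁ + (t : EReal) * recFn f y₂ :=
      le_add_mul_recFn hconv hb ⟨x₀, hx₀⟩ _ _ htpos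
    have hrb : recFn f y₂ ≠ ⊥ := recFn_ne_bot hb hx₀ y₂
    calc ((a * η₁ : ℝ) : EReal) * f (z₁ + t • y₂)
        ≤ ((a * η₁ : ℝ) : EReal) * (f z₁ + (t : EReal) * recFn f y₂) :=
          mul_le_mul_of_nonneg_left hA (by exact_mod_cast haη.le)
      _ = ((a * η₁ : ℝ) : EReal) * f z₁ + ((a * η₁ : ℝ) : EReal) * ((t : EReal) * recFn f y₂) :=
          distrib_pos haη (hb _) (mul_ne_bot_of_pos htpos hrb)
      _ = (a : EReal) * ((η₁ : EReal) * f z₁) + (b : EReal) * recFn f y₂ := by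
          rw [← coe_mul_coe_mul a η₁ (f z₁), coe_mul_coe_mul (a*η₁) t (recFn f y₂),
            show a * η₁ * t = b by rw [ht]; field_simp]
  · -- both positive
    have hη : 0 < a * η₁ + b * η₂ := by positivity
    rw [persp_of_pos hη, persp_of_pos h1, persp_of_pos h2]
    set η : ℝ := a * η₁ + b * η₂ with hηdef
    set c₁ : ℝ := a * η₁ / η with hc₁
    set c₂ : ℝ := b * η₂ / η with hc₂
    have hc₁pos : 0 < c₁ := div_pos (by positivity) hη
    have hc₂pos : 0 < c₂ := div_pos (by positivity) hη
    have hcsum : c₁ + c₂ = 1 := by rw [hc₁, hc₂, ← add_div]; exact div_self (ne_of_gt hη)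
    set z₁ : G := η₁⁻¹ • y₁ with hz₁
    set z₂ : G := η₂⁻¹ • y₂ with hz₂
    have hpt : η⁻¹ • (a • y₁ + b • y₂) = c₁ • z₁ + c₂ • z₂ := by
      rw [hz₁, hz₂, hc₁, hc₂]
      rw [smul_add, smul_smul, smul_smul, smul_smul, smul_smul]
      congr 1
      · congr 1; field_simp
      · congr 1; field_simp
    rw [hpt]
    have hA := hconv z₁ z₂ c₁ c₂ hc₁pos.le hc₂pos.le hcsum
    calc ((η : ℝ) : EReal) * f (c₁ • z₁ + c₂ • z₂)
        ≤ ((η : ℝ) : EReal) * ((c₁ : EReal) * f z₁ + (c₂ : EReal) * f z₂) :=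
          mul_le_mul_of_nonneg_left hA (by exact_mod_cast hη.le)
      _ = ((η : ℝ) : EReal) * ((c₁ : EReal) * f z₁) + ((η : ℝ) : EReal) * ((c₂ : EReal) * f z₂) :=
          distrib_pos hη (mul_ne_bot_of_pos hc₁pos (hb _)) (mul_ne_bot_of_pos hc₂pos (hb _))
      _ = (a : EReal) * ((η₁ : EReal) * f z₁) + (b : EReal) * ((η₂ : EReal) * f z₂) := by
          rw [coe_mul_coe_mul, coe_mul_coe_mul, coe_mul_coe_mul, coe_mul_coe_mul]
          rw [show η * c₁ = a * η₁ by rw [hc₁]; field_simp,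
            show η * c₂ = b * η₂ by rw [hc₂]; field_simp]

end PerspBasic

section PerspLsc
set_option linter.unusedSectionVars false
set_option maxHeartbeats 1000000
variable {G : Type*} [NormedAddCommGroup G] [InnerProductSpace ℝ G] {f : G → EReal}

lemma persp_of_pos' {q : ℝ × G} (h : 0 < q.1) :
    persp f q = (q.1 : EReal) * f (q.1⁻¹ • q.2) := if_pos h

lemma persp_of_zero' {q : ℝ × G} (h : q.1 = 0) : persp f q = recFn f q.2 := by
  rw [persp, if_neg (by rw [h]; exact lt_irrefl 0), if_pos h]

lemma persp_of_neg' {q : ℝ × G} (h : q.1 < 0) : persp f q = ⊤ := by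
  rw [persp, if_neg (not_lt.mpr h.le), if_neg (ne_of_lt h)]

lemma persp_lsc (hb : ∀ x, f x ≠ ⊥) (hne : ∃ x, f x ≠ ⊤)
    (hlsc : LowerSemicontinuous f) (hconv : ConvexE G f) :
    LowerSemicontinuous (persp f) := by
  intro p c hc
  obtain ⟨x₀, hx₀⟩ := hne
  have hct : c ≠ ⊤ := fun h => absurd (h ▸ hc) not_top_lt
  rcases eq_or_ne c ⊥ with rfl | hcb
  · exact Filter.Eventually.of_forall fun q =>
      bot_lt_iff_ne_bot.mpr (persp_ne_bot hb ⟨x₀, hx₀⟩ q)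
  obtain ⟨cr, rfl⟩ : ∃ cr : ℝ, c = (cr : EReal) :=
    ⟨c.toReal, (EReal.coe_toReal hct hcb).symm⟩
  obtain ⟨η, y⟩ := p
  rcases lt_trichotomy η 0 with hη | hη | hη
  · -- η < 0 : persp ≡ ⊤ nearby
    have hev : ∀ᶠ q : ℝ × G in 𝓝 (η, y), q.1 < 0 :=
      (isOpen_lt continuous_fst continuous_const).eventually_mem
        (show ((η, y) : ℝ × G).1 < 0 from hη)
    filter_upwards [hev] with q hq
    rw [persp_of_neg' hq]
    exact EReal.coe_lt_top cr
  · -- η = 0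
    subst hη
    rw [persp_of_zero' rfl] at hc
    obtain ⟨x, hx, hterm⟩ := lt_recFn_iff.mp hc
    obtain ⟨k, hk⟩ : ∃ k : ℝ, f x = (k : EReal) :=
      ⟨(f x).toReal, (EReal.coe_toReal hx (hb x)).symm⟩
    rw [hk] at hterm
    obtain ⟨c₁, hc₁l, hc₁r⟩ := EReal.exists_between_coe_real hterm
    have hcrc₁ : cr < c₁ := by exact_mod_cast hc₁l
    have hfxy : (((c₁ + k : ℝ)) : EReal) < f (x + y) := by
      rw [EReal.coe_add]
      rw [lt_sub_iff_real] at hc₁r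
      exact hc₁r
    set ε₁ : ℝ := min ((c₁ - cr) / (|k| + 1)) 1 with hε₁
    have hε₁pos : 0 < ε₁ := by
      rw [hε₁]
      apply lt_min _ one_pos
      apply div_pos (by linarith) (by positivity)
    -- three eventually statements
    have htd2 : Tendsto (fun q : ℝ × G => x + q.2) (𝓝 ((0 : ℝ), y)) (𝓝 (x + y)) := by
      have : Continuous (fun q : ℝ × G => x + q.2) := continuous_const.add continuous_snd
      simpa using this.tendsto ((0 : ℝ), y)
    have htd3 : Tendsto (fun q : ℝ × G => x + q.2 - q.1 • x) (𝓝 ((0 : ℝ), y)) (𝓝 (x + y)) := by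
      have hcont : Continuous (fun q : ℝ × G => x + q.2 - q.1 • x) :=
        (continuous_const.add continuous_snd).sub (continuous_fst.smul continuous_const)
      have := hcont.tendsto ((0 : ℝ), y)
      simpa using this
    have E1 : ∀ᶠ q : ℝ × G in 𝓝 ((0 : ℝ), y), ((c₁ + k : ℝ) : EReal) < f (x + q.2) :=
      htd2.eventually (hlsc (x + y) _ hfxy)
    have E2 : ∀ᶠ q : ℝ × G in 𝓝 ((0 : ℝ), y),
        ((c₁ + k : ℝ) : EReal) < f (x + q.2 - q.1 • x) :=
      htd3.eventually (hlsc (x + y) _ hfxy)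
    have E3 : ∀ᶠ q : ℝ × G in 𝓝 ((0 : ℝ), y), |q.1| < ε₁ ∧ q.1 < 1 := by
      have h5 : Tendsto (fun q : ℝ × G => q.1) (𝓝 ((0 : ℝ), y)) (𝓝 (0 : ℝ)) :=
        continuous_fst.tendsto _
      have h6 : ∀ᶠ u : ℝ in 𝓝 (0 : ℝ), |u| < ε₁ ∧ u < 1 := by
        filter_upwards [eventually_abs_sub_lt 0 hε₁pos, eventually_lt_nhds one_pos]
          with u h1 h2
        exact ⟨by simpa using h1, h2⟩
      exact h5.eventually h6
    filter_upwards [E1, E2, E3] with q h1 h2 h3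
    rcases lt_trichotomy q.1 0 with hq | hq | hq
    · rw [persp_of_neg' hq]; exact EReal.coe_lt_top cr
    · rw [persp_of_zero' hq]
      have hlt : (cr : EReal) < f (x + q.2) - (k : EReal) := by
        rw [lt_sub_iff_real]
        refine lt_of_le_of_lt ?_ h1
        rw [← EReal.coe_add]
        exact_mod_cast (by linarith : cr + k ≤ c₁ + k)
      refine hlt.trans_le ?_
      rw [← hk]
      exact le_recFn hx
    · rw [persp_of_pos' hq]
      have hq1 : q.1 < 1 := h3.2
      set z' : G := x + q.2 - q.1 • x with hz'
      have hcv := hconv x (q.1⁻¹ • q.2) (1 - q.1) q.1 (by linarith) hq.le (by ring)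
      have hpt : (1 - q.1) • x + q.1 • (q.1⁻¹ • q.2) = z' := by
        rw [hz', smul_smul, mul_inv_cancel₀ (ne_of_gt hq), one_smul, sub_smul, one_smul]
        abel
      rw [hpt, hk] at hcv
      have h5 : f z' - (((1 - q.1) * k : ℝ) : EReal) ≤ (q.1 : EReal) * f (q.1⁻¹ • q.2) := by
        rw [sub_le_iff_real]
        refine hcv.trans (le_of_eq ?_)
        rw [add_comm, ← EReal.coe_mul]
      have h6 : (cr : EReal) < f z' - (((1 - q.1) * k : ℝ) : EReal) := by
        rw [lt_sub_iff_real]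
        refine lt_of_le_of_lt ?_ h2
        rw [← EReal.coe_add]
        apply EReal.coe_le_coe_iff.mpr
        -- cr + (1 - q.1) * k ≤ c₁ + k
        have e0 : |q.1| * |k| ≤ |q.1| * (|k| + 1) := by
          apply mul_le_mul_of_nonneg_left _ (abs_nonneg _)
          linarith
        have e1 : |q.1| * (|k| + 1) < ε₁ * (|k| + 1) :=
          mul_lt_mul_of_pos_right h3.1 (by positivity)
        have e2 : ε₁ * (|k| + 1) ≤ c₁ - cr := by
          have : ε₁ ≤ (c₁ - cr) / (|k| + 1) := min_le_left _ _
          have h7 := mul_le_mul_of_nonneg_right this (by positivity : (0:ℝ) ≤ |k| + 1)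
          rwa [div_mul_cancel₀ _ (by positivity : (|k| + 1) ≠ (0:ℝ))] at h7
        have e3 : -(q.1 * k) ≤ |q.1 * k| := neg_le_abs _
        rw [abs_mul] at e3
        nlinarith
      exact lt_of_lt_of_le h6 h5
  · -- η > 0
    rw [persp_of_pos (f := f) hη] at hc
    set z : G := η⁻¹ • y with hz
    have htd1 : Tendsto (fun q : ℝ × G => q.1⁻¹ • q.2) (𝓝 (η, y)) (𝓝 z) := by
      have : ContinuousAt (fun q : ℝ × G => q.1⁻¹ • q.2) (η, y) :=
        (continuousAt_fst.inv₀ (ne_of_gt hη)).smul continuousAt_snd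
      exact this
    have hfst : Tendsto (fun q : ℝ × G => q.1) (𝓝 (η, y)) (𝓝 η) := continuous_fst.tendsto _
    rcases eq_or_ne (f z) ⊤ with hfz | hfz
    · -- f z = ⊤
      set M : ℝ := max (2 * (|cr| + 1) / η) 1 with hM
      have hM1 : (1:ℝ) ≤ M := le_max_right _ _
      have hM0 : (0:ℝ) < M := lt_of_lt_of_le one_pos hM1
      have Ea : ∀ᶠ q : ℝ × G in 𝓝 (η, y), (M : EReal) < f (q.1⁻¹ • q.2) :=
        htd1.eventually (hlsc z M (lt_of_lt_of_eq (EReal.coe_lt_top M) hfz.symm))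
      have Eb : ∀ᶠ q : ℝ × G in 𝓝 (η, y), η / 2 < q.1 := by
        apply hfst.eventually
        filter_upwards [eventually_abs_sub_lt η (by positivity : (0:ℝ) < η/2)] with u hu
        have := (abs_lt.mp hu).1
        linarith
      filter_upwards [Ea, Eb] with q h1 h2
      have hqpos : 0 < q.1 := by linarith [h2, hη]
      rw [persp_of_pos' hqpos]
      have step1 : ((q.1 * M : ℝ) : EReal) ≤ (q.1 : EReal) * f (q.1⁻¹ • q.2) := by
        rw [EReal.coe_mul]
        exact mul_le_mul_of_nonneg_left h1.le (by exact_mod_cast hqpos.le)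
      refine lt_of_lt_of_le ?_ step1
      apply EReal.coe_lt_coe_iff.mpr
      have s1 : η / 2 * M ≤ q.1 * M := mul_le_mul_of_nonneg_right h2.le hM0.le
      have s2 : 2 * (|cr| + 1) / η ≤ M := le_max_left _ _
      have s3 : η / 2 * (2 * (|cr| + 1) / η) = |cr| + 1 := by field_simp
      have s4 : η / 2 * (2 * (|cr| + 1) / η) ≤ η / 2 * M :=
        mul_le_mul_of_nonneg_left s2 (by positivity)
      have s5 : cr ≤ |cr| := le_abs_self _
      linarith [s3 ▸ s4]
    · -- f z real
      obtain ⟨v, hv⟩ : ∃ v : ℝ, f z = (v : EReal) :=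
        ⟨(f z).toReal, (EReal.coe_toReal hfz (hb z)).symm⟩
      rw [hv, ← EReal.coe_mul] at hc
      have hcr : cr < η * v := by exact_mod_cast hc
      set D : ℝ := η * v - cr with hD
      have hDpos : 0 < D := by rw [hD]; linarith
      set ε : ℝ := min (η / 2) (D / (2 * (2 * η + |v| + 1))) with hε
      have hεpos : 0 < ε := by
        rw [hε]
        apply lt_min (by positivity)
        apply div_pos hDpos (by positivity)
      have Ea : ∀ᶠ q : ℝ × G in 𝓝 (η, y), ((v - ε : ℝ) : EReal) < f (q.1⁻¹ • q.2) := by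
        have hlt : ((v - ε : ℝ) : EReal) < f z := by
          rw [hv]
          exact_mod_cast (by linarith : v - ε < v)
        exact htd1.eventually (hlsc z _ hlt)
      have Eb : ∀ᶠ q : ℝ × G in 𝓝 (η, y), |q.1 - η| < ε :=
        hfst.eventually (eventually_abs_sub_lt η hεpos)
      filter_upwards [Ea, Eb] with q h1 h2
      have hεη : ε ≤ η / 2 := min_le_left _ _
      have hqpos : 0 < q.1 := by
        have := (abs_lt.mp h2).1
        linarith
      rw [persp_of_pos' hqpos]
      have step1 : ((q.1 * (v - ε) : ℝ) : EReal) ≤ (q.1 : EReal) * f (q.1⁻¹ • q.2) := by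
        rw [EReal.coe_mul]
        exact mul_le_mul_of_nonneg_left h1.le (by exact_mod_cast hqpos.le)
      refine lt_of_lt_of_le ?_ step1
      apply EReal.coe_lt_coe_iff.mpr
      -- real arithmetic: cr < q.1 * (v - ε)
      have hq2 := abs_lt.mp h2
      have e0 : |q.1 - η| * |v| ≤ ε * |v| :=
        mul_le_mul_of_nonneg_right h2.le (abs_nonneg v)
      have e1 : -(ε * |v|) ≤ (q.1 - η) * v := by
        have := neg_abs_le ((q.1 - η) * v)
        rw [abs_mul] at this
        linarith
      have e2 : q.1 * ε ≤ (η + ε) * ε :=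
        mul_le_mul_of_nonneg_right (by linarith [hq2.2]) hεpos.le
      have e3 : ε * ε ≤ (η / 2) * ε := mul_le_mul_of_nonneg_right hεη hεpos.le
      have e4 : ε * (2 * (2 * η + |v| + 1)) ≤ D := by
        have : ε ≤ D / (2 * (2 * η + |v| + 1)) := min_le_right _ _
        have h7 := mul_le_mul_of_nonneg_right this
          (by positivity : (0:ℝ) ≤ 2 * (2 * η + |v| + 1))
        rwa [div_mul_cancel₀ _ (by positivity : 2 * (2 * η + |v| + 1) ≠ (0:ℝ))] at h7
      have e5 : 0 < η * ε := by positivity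
      have e6 : 0 ≤ ε * |v| := by positivity
      nlinarith [e1, e2, e3, e4, e5, e6]

lemma gamma0_persp (hf : Gamma0 G f) : Gamma0 (ℝ × G) (persp f) := by
  obtain ⟨⟨hbot, hne⟩, hlsc, hconv⟩ := hf
  refine ⟨⟨persp_ne_bot hbot hne, ?_⟩, persp_lsc hbot hne hlsc hconv,
    persp_convex hbot hne hconv⟩
  obtain ⟨x₀, hx₀⟩ := hne
  refine ⟨((1 : ℝ), x₀), ?_⟩
  rw [persp_of_pos one_pos, inv_one, one_smul]
  rw [EReal.coe_one, one_mul]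
  exact hx₀

end PerspLsc

end StatementEleven
end

/-- for `φ ∈ Γ₀(𝒢)`, `ψ ∈ Γ₀(𝒢)` positively homogeneous with
`dom φ ∩ dom ψ ≠ ∅` and `δ ∈ ℝ`, the perspective of `φ + ψ + δ` is in
`Γ₀(ℝ ⊕ 𝒢)` and equals `(η,y) ↦ φ̃(η,y) + ψ(y) + δη`. -/
theorem perspective_plus_homogeneous_plus_constant
    {G : Type*} [NormedAddCommGroup G] [InnerProductSpace ℝ G] [CompleteSpace G]
    (φ ψ : G → EReal) (hφ : Gamma0 G φ) (hψ : Gamma0 G ψ)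
    (hpos : ∀ lam : ℝ, 0 < lam → ∀ y : G, ψ (lam • y) = (lam : EReal) * ψ y)
    (hdom : ∃ x : G, φ x ≠ ⊤ ∧ ψ x ≠ ⊤)
    (δ : ℝ) :
    Gamma0 (ℝ × G) (persp (fun x => φ x + ψ x + (δ : EReal))) ∧
    ∀ (η : ℝ) (y : G),
      persp (fun x => φ x + ψ x + (δ : EReal)) (η, y)
        = persp φ (η, y) + ψ y + ((δ * η : ℝ) : EReal) := by
  classical
  obtain ⟨⟨hφb, _⟩, hφl, hφc⟩ := hφ
  obtain ⟨⟨hψb, _⟩, hψl, hψc⟩ := hψ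
  obtain ⟨x₀, hx₀φ, hx₀ψ⟩ := hdom
  set f : G → EReal := fun x => φ x + ψ x + (δ : EReal) with hf
  have hfb : ∀ x, f x ≠ ⊥ := by
    intro x h
    rw [hf] at h
    simp only at h
    rcases EReal.add_eq_bot_iff.mp h with h' | h'
    · rcases EReal.add_eq_bot_iff.mp h' with h'' | h''
      · exact hφb x h''
      · exact hψb x h''
    · exact EReal.coe_ne_bot _ h'
  have hfx₀ : f x₀ ≠ ⊤ := by
    rw [hf]
    simp only
    rw [ne_eq, StatementEleven.add3_eq_top_iff δ (hφb x₀) (hψb x₀)]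
    push_neg
    exact ⟨hx₀φ, hx₀ψ⟩
  have hfl : LowerSemicontinuous f := by
    have h1 : LowerSemicontinuous (fun x => φ x + ψ x) :=
      StatementEleven.lsc_add hφl hψl hφb hψb
    have h2 : LowerSemicontinuous (fun _ : G => (δ : EReal)) :=
      lowerSemicontinuous_const
    exact StatementEleven.lsc_add h1 h2
      (fun x => by
        intro h
        rcases EReal.add_eq_bot_iff.mp h with h' | h'
        · exact hφb x h'
        · exact hψb x h')
      (fun _ => EReal.coe_ne_bot _)
  have hfc : ConvexE G f := by
    intro x y a b ha hb hab
    rcases eq_or_lt_of_le ha with rfl | hapos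
    · have hb1 : b = 1 := by linarith
      subst hb1
      simp only [zero_smul, one_smul, zero_add, EReal.coe_zero, EReal.coe_one, zero_mul,
        one_mul]
      exact le_rfl
    rcases eq_or_lt_of_le hb with rfl | hbpos
    · have ha1 : a = 1 := by linarith
      subst ha1
      simp only [zero_smul, one_smul, add_zero, EReal.coe_zero, EReal.coe_one, zero_mul,
        one_mul]
      exact le_rfl
    have h1 := hφc x y a b ha hb hab
    have h2 := hψc x y a b ha hb hab
    have hfxy : f (a • x + b • y) = φ (a • x + b • y) + ψ (a • x + b • y) + (δ : EReal) := rfl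
    rw [hfxy]
    have hstep : φ (a • x + b • y) + ψ (a • x + b • y) + (δ : EReal)
        ≤ ((a : EReal) * φ x + (b : EReal) * φ y)
          + ((a : EReal) * ψ x + (b : EReal) * ψ y) + (δ : EReal) :=
      add_le_add_left (add_le_add h1 h2) _
    refine hstep.trans (le_of_eq ?_)
    have hδ : (δ : EReal) = ((a * δ : ℝ) : EReal) + ((b * δ : ℝ) : EReal) := by
      rw [← EReal.coe_add]
      congr 1
      rw [← add_mul, hab, one_mul]
    have hax : (a : EReal) * f x = (a : EReal) * φ x + (a : EReal) * ψ x
        + ((a * δ : ℝ) : EReal) := by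
      have e1 : (a : EReal) * (φ x + ψ x + (δ : EReal))
          = (a : EReal) * (φ x + ψ x) + (a : EReal) * (δ : EReal) :=
        StatementEleven.distrib_pos hapos
          (fun h => by
            rcases EReal.add_eq_bot_iff.mp h with h' | h'
            exacts [hφb x h', hψb x h'])
          (EReal.coe_ne_bot _)
      have e2 : (a : EReal) * (φ x + ψ x) = (a : EReal) * φ x + (a : EReal) * ψ x :=
        StatementEleven.distrib_pos hapos (hφb x) (hψb x)
      rw [hf]
      simp only
      rw [e1, e2, ← EReal.coe_mul]
    have hby : (b : EReal) * f y = (b : EReal) * φ y + (b : EReal) * ψ y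
        + ((b * δ : ℝ) : EReal) := by
      have e1 : (b : EReal) * (φ y + ψ y + (δ : EReal))
          = (b : EReal) * (φ y + ψ y) + (b : EReal) * (δ : EReal) :=
        StatementEleven.distrib_pos hbpos
          (fun h => by
            rcases EReal.add_eq_bot_iff.mp h with h' | h'
            exacts [hφb y h', hψb y h'])
          (EReal.coe_ne_bot _)
      have e2 : (b : EReal) * (φ y + ψ y) = (b : EReal) * φ y + (b : EReal) * ψ y :=
        StatementEleven.distrib_pos hbpos (hφb y) (hψb y)
      rw [hf]
      simp only
      rw [e1, e2, ← EReal.coe_mul]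
    rw [hax, hby, hδ]
    abel
  have hfG : Gamma0 G f := ⟨⟨hfb, ⟨x₀, hfx₀⟩⟩, hfl, hfc⟩
  constructor
  · exact StatementEleven.gamma0_persp hfG
  · intro η y
    rcases lt_trichotomy η 0 with hη | hη | hη
    · rw [StatementEleven.persp_of_neg hη, StatementEleven.persp_of_neg hη,
        EReal.top_add_of_ne_bot (hψb y), EReal.top_add_of_ne_bot (EReal.coe_ne_bot _)]
    · subst hη
      rw [StatementEleven.persp_of_zero, StatementEleven.persp_of_zero]
      rw [StatementEleven.rec_sum hφb hφl hφc hψb hψl hψc hpos hx₀φ hx₀ψ δ y]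
      norm_num
    · rw [StatementEleven.persp_of_pos hη, StatementEleven.persp_of_pos hη]
      set z : G := η⁻¹ • y with hz
      have hfz : f z = φ z + ψ z + (δ : EReal) := rfl
      rw [hfz]
      have e1 : (η : EReal) * (φ z + ψ z + (δ : EReal))
          = (η : EReal) * (φ z + ψ z) + (η : EReal) * (δ : EReal) :=
        StatementEleven.distrib_pos hη
          (fun h => by
            rcases EReal.add_eq_bot_iff.mp h with h' | h'
            exacts [hφb z h', hψb z h'])
          (EReal.coe_ne_bot _)
      have e2 : (η : EReal) * (φ z + ψ z) = (η : EReal) * φ z + (η : EReal) * ψ z :=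
        StatementEleven.distrib_pos hη (hφb z) (hψb z)
      have e3 : (η : EReal) * ψ z = ψ y := by
        have := hpos η hη z
        rw [hz, smul_smul, mul_inv_cancel₀ (ne_of_gt hη), one_smul] at this
        exact this.symm
      have e4 : (η : EReal) * (δ : EReal) = ((δ * η : ℝ) : EReal) := by
        rw [← EReal.coe_mul]
        norm_cast
        ring
      rw [e1, e2, e3, e4]

end
end
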